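/- arXiv:1411.1370 — 6 statements merged into one kernel-verified Lean document; each statement's English description precedes it below -/
import Mathlib

section
/- The free semigroup with relations in a graph G is cancellative: if u·w and u'·w represent the same element of S(G) (for words u, u', w), then u and u' represent the same element of S(G); similarly for left cancellation. -/
/-- One application of a commutation relation encoded by the graph `G`. -/
def SwapRel {V : Type*} (G : SimpleGraph V) (r s : List V) : Prop :=
  ∃ (w₁ w₂ : List V) (a b : V), G.Adj a b ∧ r = w₁ ++ a :: b :: w₂ ∧ s = w₁ ++ b :: a :: w₂

section Aux

variable {V : Type*} {G : SimpleGraph V}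

private lemma two_decomp : ∀ {s₁ w₁ w₂ s₂ : List V} {a x y : V},
    w₁ ++ a :: w₂ = s₁ ++ x :: y :: s₂ →
    (∃ t, w₁ = s₁ ++ x :: y :: t ∧ s₂ = t ++ a :: w₂) ∨
    (∃ t, s₁ = w₁ ++ a :: t ∧ w₂ = t ++ x :: y :: s₂) ∨
    (w₁ = s₁ ∧ x = a ∧ w₂ = y :: s₂) ∨
    (w₁ = s₁ ++ [x] ∧ y = a ∧ s₂ = w₂) := by
  intro s₁
  induction s₁ with
  | nil =>
    intro w₁ w₂ s₂ a x y h
    rcases w₁ with _ | ⟨c, _ | ⟨d, w₁'⟩⟩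
    · simp only [List.nil_append, List.cons.injEq] at h
      exact Or.inr (Or.inr (Or.inl ⟨rfl, h.1.symm, h.2⟩))
    · simp only [List.cons_append, List.nil_append, List.cons.injEq] at h
      obtain ⟨rfl, rfl, rfl⟩ := h
      exact Or.inr (Or.inr (Or.inr ⟨rfl, rfl, rfl⟩))
    · simp only [List.cons_append, List.nil_append, List.cons.injEq] at h
      obtain ⟨rfl, rfl, h⟩ := h
      exact Or.inl ⟨w₁', by simp, h.symm⟩
  | cons c s₁' ih =>
    intro w₁ w₂ s₂ a x y h
    rcases w₁ with _ | ⟨d, w₁'⟩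
    · simp only [List.nil_append, List.cons_append, List.cons.injEq] at h
      obtain ⟨rfl, rfl⟩ := h
      exact Or.inr (Or.inl ⟨s₁', by simp, rfl⟩)
    · simp only [List.cons_append, List.cons.injEq] at h
      obtain ⟨rfl, h⟩ := h
      rcases ih h with ⟨t, h1, h2⟩ | ⟨t, h1, h2⟩ | ⟨h1, h2, h3⟩ | ⟨h1, h2, h3⟩
      · exact Or.inl ⟨t, by simp [h1], h2⟩
      · exact Or.inr (Or.inl ⟨t, by simp [h1], h2⟩)
      · exact Or.inr (Or.inr (Or.inl ⟨by simp [h1], h2, h3⟩))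
      · exact Or.inr (Or.inr (Or.inr ⟨by simp [h1], h2, h3⟩))

private lemma key {a : V} {u w : List V}
    (h : Relation.ReflTransGen (SwapRel G) (a :: u) w) :
    ∃ w₁ w₂, w = w₁ ++ a :: w₂ ∧ (∀ b ∈ w₁, G.Adj a b) ∧
      Relation.ReflTransGen (SwapRel G) u (w₁ ++ w₂) := by
  induction h with
  | refl => exact ⟨[], u, rfl, by simp, Relation.ReflTransGen.refl⟩
  | tail _ step ih =>
    obtain ⟨w₁, w₂, rfl, hadj, hu⟩ := ih
    obtain ⟨s₁, s₂, x, y, hxy, heq, rfl⟩ := step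
    rcases two_decomp heq with ⟨t, h1, h2⟩ | ⟨t, h1, h2⟩ | ⟨h1, h2, h3⟩ | ⟨h1, h2, h3⟩
    · subst h1; subst h2
      refine ⟨s₁ ++ y :: x :: t, w₂, by simp, ?_, ?_⟩
      · intro b hb
        apply hadj
        simp only [List.mem_append, List.mem_cons] at hb ⊢
        tauto
      · refine hu.tail ⟨s₁, t ++ w₂, x, y, hxy, by simp, by simp⟩
    · subst h1; subst h2
      refine ⟨w₁, t ++ y :: x :: s₂, by simp, hadj, ?_⟩
      refine hu.tail ⟨w₁ ++ t, s₂, x, y, hxy, by simp, by simp⟩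
    · subst h2; subst h1; subst h3
      refine ⟨w₁ ++ [y], s₂, by simp, ?_, by simpa using hu⟩
      intro b hb
      simp only [List.mem_append, List.mem_singleton] at hb
      rcases hb with hb | rfl
      · exact hadj b hb
      · exact hxy
    · subst h2; subst h1; subst h3
      refine ⟨s₁, x :: s₂, by simp, fun b hb => hadj b (by simp [hb]), by simpa using hu⟩

private lemma cancel_head {a : V} {u v : List V}
    (h : Relation.ReflTransGen (SwapRel G) (a :: u) (a :: v)) :
    Relation.ReflTransGen (SwapRel G) u v := by
  obtain ⟨w₁, w₂, heq, hadj, hu⟩ := key h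
  cases w₁ with
  | nil =>
    simp only [List.nil_append, List.cons.injEq] at heq
    rw [heq.2]
    simpa using hu
  | cons c w₁' =>
    simp only [List.cons_append, List.cons.injEq] at heq
    exact absurd (heq.1 ▸ hadj c (by simp)) (G.irrefl)

private lemma cancel_left : ∀ (w : List V) {u v : List V},
    Relation.ReflTransGen (SwapRel G) (w ++ u) (w ++ v) →
    Relation.ReflTransGen (SwapRel G) u v := by
  intro w
  induction w with
  | nil => intro u v h; simpa using h
  | cons c w' ih =>
    intro u v h
    exact ih (cancel_head (by simpa using h))

private lemma swapRel_reverse {r s : List V} (h : SwapRel G r s) :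
    SwapRel G r.reverse s.reverse := by
  obtain ⟨w₁, w₂, a, b, hab, rfl, rfl⟩ := h
  exact ⟨w₂.reverse, w₁.reverse, b, a, hab.symm, by simp, by simp⟩

private lemma rtg_reverse {r s : List V}
    (h : Relation.ReflTransGen (SwapRel G) r s) :
    Relation.ReflTransGen (SwapRel G) r.reverse s.reverse := by
  induction h with
  | refl => exact Relation.ReflTransGen.refl
  | tail _ step ih => exact ih.tail (swapRel_reverse step)

end Aux

/-- The free semigroup with relations in `G` is cancellative: if `u ++ w` and `u' ++ w`
represent the same element of `S(G)` then so do `u` and `u'`; similarly on the left. -/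
theorem stmt1 {V : Type*} (G : SimpleGraph V) (u u' w : List V) :
    (Relation.ReflTransGen (SwapRel G) (u ++ w) (u' ++ w) →
      Relation.ReflTransGen (SwapRel G) u u') ∧
    (Relation.ReflTransGen (SwapRel G) (w ++ u) (w ++ u') →
      Relation.ReflTransGen (SwapRel G) u u') := by
  constructor
  · intro h
    have h' := rtg_reverse h
    simp only [List.reverse_append] at h'
    have := cancel_left w.reverse h'
    simpa using rtg_reverse this
  · exact cancel_left w
end

section
/- Let T_0, T_1, ... be bounded operators on an increasing chain of Hilbert spaces H_0 ⊆ H_1 ⊆ ..., with ‖T_n‖ ≤ c for all n, and suppose each T_{n+1} is a power dilation of T_n (i.e., P_{H_n} T_{n+1}^k |_{H_n} = T_n^k for all k ∈ ℕ). Let H be the closed span of ∪ H_n and P_n the orthogonal projection onto H_n. Then the sequence T_n P_n converges in the strong operator topology to an operator T ∈ B(H) with ‖T‖ ≤ c, and T is a power dilation of every T_n. -/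
open ContinuousLinearMap Filter Topology

/-!
For `x ∈ H_N` and `N ≤ m ≤ n`, the dilation identity with `k = 1` gives `P_m (T_n x) = T_m x`,
so by Pythagoras `‖T_n x - T_m x‖² = ‖T_n x‖² - ‖T_m x‖²`. The norms `‖T_n x‖` increase and are
bounded by `c ‖x‖`, hence `(T_n x)` is Cauchy. The uniform bound `‖T_n‖ ≤ c` extends this from the
dense set `⋃ H_N` to all of `H`; the limit `S` inherits the bound, `T_n ^ k → S ^ k` strongly, and
the compressions `P_n T_j ^ k = T_n ^ k` on `H_n` (for `j ≥ n`) pass to the limit.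
-/

theorem IsSelfAdjoint.mul_eq_left_of_mul_eq_right {R : Type*} [Mul R] [StarMul R] {p q : R}
    (hp : IsSelfAdjoint p) (hq : IsSelfAdjoint q) (h : q * p = p) : p * q = p := by
  simpa [star_mul, hp.star_eq, hq.star_eq] using congrArg star h

section StrongConvergence

variable {𝕜 E F : Type*} [NontriviallyNormedField 𝕜] [NormedAddCommGroup E] [NormedSpace 𝕜 E]
  [NormedAddCommGroup F] [NormedSpace 𝕜 F]

theorem cauchySeq_apply_of_dense {A : ℕ → E →L[𝕜] F} {C : ℝ} (hA : ∀ n, ‖A n‖ ≤ C)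
    {s : Set E} (hs : Dense s) (hcauchy : ∀ x ∈ s, CauchySeq fun n => A n x) (x : E) :
    CauchySeq fun n => A n x := by
  -- Being Cauchy at `x` means `(A m - A n) x → 0`, a closed condition on `x` by equicontinuity.
  set D : ℕ × ℕ → E →L[𝕜] F := fun p => A p.1 - A p.2
  have hD : Equicontinuous ((↑) ∘ D) := (NormedSpace.equicontinuous_TFAE D).out 5 1 |>.mp
    (show ∃ C', ∀ p, ‖D p‖ ≤ C' from
      ⟨C + C, fun p => (norm_sub_le _ _).trans (add_le_add (hA p.1) (hA p.2))⟩)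
  have hiff : ∀ x, (CauchySeq fun n => A n x) ↔ Tendsto (fun p => D p x) atTop (𝓝 0) := by
    intro x
    simp only [D, sub_apply, cauchySeq_iff_tendsto_dist_atTop_0, dist_eq_norm,
      ← tendsto_zero_iff_norm_tendsto_zero]
  have hclosed : IsClosed {x | Tendsto (fun p => D p x) atTop (𝓝 0)} :=
    hD.isClosed_setOfPred_tendsto (f := fun _ => 0) continuous_const
  have hsub : closure s ⊆ {x | Tendsto (fun p => D p x) atTop (𝓝 0)} :=
    hclosed.closure_subset_iff.mpr fun y hy => (hiff y).mp (hcauchy y hy)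
  exact (hiff x).mpr (hsub (hs.closure_eq ▸ Set.mem_univ x))

theorem exists_norm_le_tendsto_apply [CompleteSpace F] {A : ℕ → E →L[𝕜] F} {C : ℝ}
    (hA : ∀ n, ‖A n‖ ≤ C) (hcauchy : ∀ x, CauchySeq fun n => A n x) :
    ∃ S : E →L[𝕜] F, ‖S‖ ≤ C ∧ ∀ x, Tendsto (fun n => A n x) atTop (𝓝 (S x)) := by
  choose L hL using fun x => cauchySeq_tendsto_of_complete (hcauchy x)
  have hbound : ∀ x, ‖L x‖ ≤ C * ‖x‖ := fun x =>
    le_of_tendsto (hL x).norm (Eventually.of_forall fun n => (A n).le_of_opNorm_le (hA n) x)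
  let S₀ := linearMapOfTendsto L (fun n => (A n : E →ₗ[𝕜] F)) (tendsto_pi_nhds.mpr hL)
  exact ⟨S₀.mkContinuous C hbound,
    LinearMap.mkContinuous_norm_le _ ((norm_nonneg _).trans (hA 0)) _, hL⟩

theorem tendsto_apply_apply_of_norm_le {ι : Type*} {l : Filter ι} {A : ι → E →L[𝕜] F}
    {S : E →L[𝕜] F} {C : ℝ} (hA : ∀ i, ‖A i‖ ≤ C)
    (hAS : ∀ x, Tendsto (fun i => A i x) l (𝓝 (S x))) {u : ι → E} {y : E}
    (hu : Tendsto u l (𝓝 y)) : Tendsto (fun i => A i (u i)) l (𝓝 (S y)) := by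
  have hsmall : Tendsto (fun i => A i (u i - y)) l (𝓝 0) := by
    refine squeeze_zero_norm (fun i => (A i).le_of_opNorm_le (hA i) _) ?_
    simpa using (tendsto_iff_norm_sub_tendsto_zero.mp hu).const_mul C
  simpa [map_sub] using hsmall.add (hAS y)

theorem tendsto_pow_apply_of_norm_le {ι : Type*} {l : Filter ι} {A : ι → E →L[𝕜] E}
    {S : E →L[𝕜] E} {C : ℝ} (hA : ∀ i, ‖A i‖ ≤ C)
    (hAS : ∀ x, Tendsto (fun i => A i x) l (𝓝 (S x))) (k : ℕ) (x : E) :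
    Tendsto (fun i => (A i ^ k) x) l (𝓝 ((S ^ k) x)) := by
  induction k with
  | zero => simpa only [pow_zero, one_apply_eq_self] using tendsto_const_nhds
  | succ k ih =>
    simpa only [pow_succ', mul_apply_eq_comp] using tendsto_apply_apply_of_norm_le hA hAS ih

end StrongConvergence

section PowerDilation

variable {𝕜 E : Type*} [NontriviallyNormedField 𝕜] [NormedAddCommGroup E] [NormedSpace 𝕜 E]

/-- `S` is a power dilation of `R`, the smaller space being the range of the projection `P`. -/
def IsPowerDilation (P S R : E →L[𝕜] E) : Prop :=
  ∀ k, ∀ h ∈ LinearMap.range (P : E →ₗ[𝕜] E), P ((S ^ k) h) = (R ^ k) h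

namespace IsPowerDilation

variable {P Q S R R' : E →L[𝕜] E}

theorem refl (hP : IsIdempotentElem P) (hPR : P ∘L R = R) : IsPowerDilation P R R := by
  intro k h hh
  cases k with
  | zero => simpa using (LinearMap.IsIdempotentElem.mem_range_iff hP.toLinearMap).mp hh
  | succ k => rw [pow_succ', mul_apply_eq_comp, ← comp_apply, hPR]

theorem trans (hPQ : P ∘L Q = P)
    (hrange : LinearMap.range (P : E →ₗ[𝕜] E) ≤ LinearMap.range (Q : E →ₗ[𝕜] E))
    (hQ : IsPowerDilation Q S R) (hP : IsPowerDilation P R R') : IsPowerDilation P S R' := by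
  intro k h hh
  rw [← hP k h hh, ← hQ k h (hrange hh), ← comp_apply P Q, hPQ]

theorem of_tendsto {ι : Type*} {l : Filter ι} [l.NeBot] {A : ι → E →L[𝕜] E} {C : ℝ}
    (hA : ∀ i, ‖A i‖ ≤ C) (hAS : ∀ x, Tendsto (fun i => A i x) l (𝓝 (S x)))
    (hdil : ∀ᶠ i in l, IsPowerDilation P (A i) R) : IsPowerDilation P S R := by
  intro k h hh
  have hlim := (P.continuous.tendsto _).comp (tendsto_pow_apply_of_norm_le hA hAS k h)
  refine tendsto_nhds_unique hlim (tendsto_const_nhds.congr' ?_)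
  filter_upwards [hdil] with i hi
  exact (hi k h hh).symm

end IsPowerDilation

theorem monotone_range_of_comp_eq {P : ℕ → E →L[𝕜] E}
    (hPmono : ∀ m n, m ≤ n → P n ∘L P m = P m) :
    Monotone fun n => LinearMap.range (P n : E →ₗ[𝕜] E) := by
  rintro m n hmn _ ⟨x, rfl⟩
  exact ⟨P m x, by simpa using congr($(hPmono m n hmn) x)⟩

end PowerDilation

section Hilbert

variable {𝕜 E : Type*} [RCLike 𝕜] [NormedAddCommGroup E] [InnerProductSpace 𝕜 E]
  [CompleteSpace E]

theorem IsStarProjection.norm_sub_apply_sq {p : E →L[𝕜] E}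
    (hp : IsStarProjection p) (x : E) : ‖x - p x‖ ^ 2 = ‖x‖ ^ 2 - ‖p x‖ ^ 2 := by
  have hker : p (x - p x) = 0 := by
    rw [map_sub, ← mul_apply_eq_comp, hp.isIdempotentElem.eq, sub_self]
  have horth : inner 𝕜 (p x) (x - p x) = 0 := by
    rw [← adjoint_inner_right, hp.isSelfAdjoint.adjoint_eq, hker, inner_zero_right]
  have := norm_add_sq_eq_norm_sq_add_norm_sq_of_inner_eq_zero _ _ horth
  rw [add_sub_cancel] at this
  linarith

theorem cauchySeq_of_isStarProjection_apply_eq {P : ℕ → E →L[𝕜] E}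
    (hP : ∀ n, IsStarProjection (P n)) {y : ℕ → E} (hy : ∀ m n, m ≤ n → P m (y n) = y m)
    {C : ℝ} (hC : ∀ n, ‖y n‖ ≤ C) : CauchySeq y := by
  have hdist : ∀ m n, m ≤ n → ‖y n - y m‖ ^ 2 = ‖y n‖ ^ 2 - ‖y m‖ ^ 2 := fun m n hmn => by
    simpa only [hy m n hmn] using (hP m).norm_sub_apply_sq (y n)
  have hmono : Monotone fun n => ‖y n‖ ^ 2 := fun m n hmn => by
    nlinarith [hdist m n hmn, sq_nonneg ‖y n - y m‖]
  have hbdd : BddAbove (Set.range fun n => ‖y n‖ ^ 2) :=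
    ⟨C ^ 2, by rintro _ ⟨n, rfl⟩; exact pow_le_pow_left₀ (norm_nonneg _) (hC n) 2⟩
  have hnorms := Metric.cauchySeq_iff'.mp (tendsto_atTop_ciSup hmono hbdd).cauchySeq
  refine Metric.cauchySeq_iff'.mpr fun ε hε => ?_
  obtain ⟨N, hN⟩ := hnorms (ε ^ 2) (by positivity)
  refine ⟨N, fun n hn => ?_⟩
  have hlt : ‖y n - y N‖ ^ 2 < ε ^ 2 := by
    rw [hdist N n hn]
    exact (le_abs_self _).trans_lt (hN n hn)
  rw [dist_eq_norm]
  exact lt_of_pow_lt_pow_left₀ 2 hε.le hlt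

variable {P T : ℕ → E →L[𝕜] E}

theorem isPowerDilation_of_le (hP : ∀ n, IsStarProjection (P n))
    (hPmono : ∀ m n, m ≤ n → P n ∘L P m = P m) (hPT : ∀ n, P n ∘L T n = T n)
    (hdil : ∀ n, IsPowerDilation (P n) (T (n + 1)) (T n)) {n j : ℕ} (hnj : n ≤ j) :
    IsPowerDilation (P n) (T j) (T n) := by
  induction j, hnj using Nat.le_induction with
  | base => exact .refl (hP n).isIdempotentElem (hPT n)
  | succ j hnj ih =>
    have hPP : P n ∘L P j = P n := (hP n).isSelfAdjoint.mul_eq_left_of_mul_eq_right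
      (hP j).isSelfAdjoint (hPmono n j hnj)
    exact (hdil j).trans hPP (monotone_range_of_comp_eq hPmono hnj) ih

theorem cauchySeq_apply_of_mem_range (hP : ∀ n, IsStarProjection (P n))
    (hrange : Monotone fun n => LinearMap.range (P n : E →ₗ[𝕜] E))
    (hchain : ∀ n j, n ≤ j → IsPowerDilation (P n) (T j) (T n)) {C : ℝ}
    (hT : ∀ n, ‖T n‖ ≤ C) {N : ℕ} {x : E} (hx : x ∈ LinearMap.range (P N : E →ₗ[𝕜] E)) :
    CauchySeq fun n => T n x := by
  refine (cauchySeq_shift N).mp (cauchySeq_of_isStarProjection_apply_eq (fun m => hP (m + N))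
    (fun m n hmn => ?_) fun n => (T (n + N)).le_of_opNorm_le (hT _) x)
  simpa using hchain (m + N) (n + N) (by omega) 1 x (hrange (Nat.le_add_left N m) hx)

end Hilbert

/-- Bounded chains of power dilations: if `T n` acts on the increasing closed subspace
`H_n = range (P n)`, `‖T n‖ ≤ c`, and each `T (n+1)` is a power dilation of `T n`
(`P n ∘ T (n+1)^k = T n ^ k` on `H_n` for all `k`), then the sequence `T n ∘ P n`
converges in the strong operator topology to an operator `S` with `‖S‖ ≤ c` which is a
power dilation of every `T n`. -/
theorem stmt6 {H : Type*} [NormedAddCommGroup H] [InnerProductSpace ℂ H] [CompleteSpace H]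
    (P T : ℕ → H →L[ℂ] H) (c : ℝ)
    (hPproj : ∀ n, IsIdempotentElem (P n)) (hPsa : ∀ n, IsSelfAdjoint (P n))
    (hPmono : ∀ m n, m ≤ n → P n ∘L P m = P m)
    (hdense : (⨆ n, LinearMap.range (P n : H →ₗ[ℂ] H)).topologicalClosure = ⊤)
    (hsupp : ∀ n, P n ∘L T n = T n ∧ T n ∘L P n = T n)
    (hnorm : ∀ n, ‖T n‖ ≤ c)
    (hdil : ∀ n k, ∀ h ∈ LinearMap.range (P n : H →ₗ[ℂ] H),
      P n ((T (n + 1) ^ k) h) = ((T n ^ k) h)) :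
    ∃ S : H →L[ℂ] H, ‖S‖ ≤ c ∧
      (∀ x : H, Tendsto (fun n => T n (P n x)) atTop (𝓝 (S x))) ∧
      (∀ n k, ∀ h ∈ LinearMap.range (P n : H →ₗ[ℂ] H), P n ((S ^ k) h) = ((T n ^ k) h)) := by
  have hP n : IsStarProjection (P n) := ⟨hPproj n, hPsa n⟩
  have hrange := monotone_range_of_comp_eq hPmono
  have hchain n j (hnj : n ≤ j) := isPowerDilation_of_le hP hPmono (fun n => (hsupp n).1) hdil hnj
  have hTP n x : T n (P n x) = T n x := congr($((hsupp n).2) x)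
  have hs : Dense (⋃ N, (LinearMap.range (P N : H →ₗ[ℂ] H) : Set H)) := by
    rw [← Submodule.coe_iSup_of_directed _ hrange.directed_le, dense_iff_closure_eq,
      ← Submodule.topologicalClosure_coe]
    simp [hdense]
  obtain ⟨S, hSnorm, hS⟩ := exists_norm_le_tendsto_apply hnorm <|
    cauchySeq_apply_of_dense hnorm hs fun x hx => by
      obtain ⟨N, hN⟩ := Set.mem_iUnion.mp hx
      exact cauchySeq_apply_of_mem_range hP hrange hchain hnorm hN
  refine ⟨S, hSnorm, fun x => by simpa only [hTP] using hS x, fun n => ?_⟩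
  exact IsPowerDilation.of_tendsto hnorm hS (eventually_ge_atTop n |>.mono (hchain n))
end

section
/- If a contraction T on a Hilbert space H has an isometric co-extension V on K ⊇ H (V* extends T*), and V in turn has a co-isometric extension, and this alternating process of isometric co-extensions and co-isometric extensions can be continued indefinitely, then T has a unitary power dilation. Contrapositively: if a semigroup of contractions has no unitary dilation, then at some stage either an isometric co-extension or a co-isometric extension fails to exist. -/
open ContinuousLinearMap Filter Topology

/-!
Write `Hₙ` for the range of `P n`. The isometry and co-isometry conditions force the chain to
stabilise: `T m x` no longer depends on `m ≥ 2k + 1` once `x ∈ H_{2k+1}`, and `(T m)† x` no longer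
depends on `m ≥ 2k + 2` once `x ∈ H_{2k+2}`. Since `‖T m‖ ≤ 1` for `m ≥ 1` and `⋃ Hₙ` is dense, the
`T m` converge strongly to an operator `U`. It is isometric on every `H_{2k+1}`, and `U†` is
isometric on every `H_{2k+2}`, so `U` is unitary. Finally `U` agrees with `T 1` on `H₁`, `H₁` is
invariant under `T 1`, and `P 0 * T 1 = T 0 * P 0`, so `U ^ k` compresses to `T 0 ^ k` on `H₀`.
-/

section

variable {𝕜 E F : Type*} [RCLike 𝕜]

theorem ContinuousLinearMap.cauchySeq_apply_of_dense [NormedAddCommGroup E] [NormedSpace 𝕜 E]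
    [NormedAddCommGroup F] [NormedSpace 𝕜 F] {g : ℕ → E →L[𝕜] F} {C : ℝ}
    (hg : ∀ᶠ m in atTop, ‖g m‖ ≤ C) {s : Set E} (hs : Dense s)
    (hsg : ∀ y ∈ s, CauchySeq fun m ↦ g m y) (x : E) : CauchySeq fun m ↦ g m x := by
  rw [Metric.cauchySeq_iff]
  intro ε hε
  obtain ⟨N₀, hN₀⟩ := eventually_atTop.mp hg
  have hC : 0 ≤ C := (norm_nonneg _).trans (hN₀ N₀ le_rfl)
  obtain ⟨δ, hδ, hCδ⟩ := exists_pos_mul_lt (by positivity : 0 < ε / 3) C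
  obtain ⟨y, hxy, hy⟩ := Metric.dense_iff.mp hs x δ hδ
  obtain ⟨N₁, hN₁⟩ := Metric.cauchySeq_iff.mp (hsg y hy) (ε / 3) (by positivity)
  have hnear : ∀ m ≥ N₀, dist (g m x) (g m y) < ε / 3 := fun m hm ↦ calc
    dist (g m x) (g m y) ≤ ‖g m‖ * dist x y := (g m).dist_le_opNorm x y
    _ ≤ C * δ := mul_le_mul (hN₀ m hm) (Metric.mem_ball'.mp hxy).le dist_nonneg hC
    _ < ε / 3 := hCδ
  refine ⟨max N₀ N₁, fun m hm n hn ↦ ?_⟩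
  rw [ge_iff_le, max_le_iff] at hm hn
  calc dist (g m x) (g n x)
      ≤ dist (g m x) (g m y) + dist (g m y) (g n y) + dist (g n y) (g n x) :=
        dist_triangle4 _ _ _ _
    _ < ε / 3 + ε / 3 + ε / 3 := by
        gcongr
        · exact hnear m hm.1
        · exact hN₁ m hm.2 n hn.2
        · exact dist_comm (g n x) (g n y) ▸ hnear n hn.1
    _ = ε := by ring

/-- Banach–Steinhaus turns the pointwise limit into a bounded operator. -/
theorem ContinuousLinearMap.exists_tendsto_apply_of_dense [NormedAddCommGroup E]
    [NormedSpace 𝕜 E] [CompleteSpace E] [NormedAddCommGroup F] [NormedSpace 𝕜 F] [CompleteSpace F]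
    {g : ℕ → E →L[𝕜] F} {C : ℝ} (hg : ∀ᶠ m in atTop, ‖g m‖ ≤ C) {s : Set E} (hs : Dense s)
    (hsg : ∀ y ∈ s, CauchySeq fun m ↦ g m y) :
    ∃ U : E →L[𝕜] F, ∀ x, Tendsto (fun m ↦ g m x) atTop (𝓝 (U x)) := by
  choose f hf using fun x ↦ cauchySeq_tendsto_of_complete (cauchySeq_apply_of_dense hg hs hsg x)
  exact ⟨continuousLinearMapOfTendsto g (tendsto_pi_nhds.mpr hf), hf⟩

theorem ContinuousLinearMap.norm_le_one_of_comp_eq [NormedAddCommGroup E] [NormedSpace 𝕜 E]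
    [NormedAddCommGroup F] [NormedSpace 𝕜 F] {P : E →L[𝕜] E} {A : E →L[𝕜] F} (hP : ‖P‖ ≤ 1)
    (hAP : A ∘L P = A) (hA : ∀ x ∈ LinearMap.range (P : E →ₗ[𝕜] E), ‖A x‖ = ‖x‖) : ‖A‖ ≤ 1 := by
  refine opNorm_le_bound _ zero_le_one fun x ↦ ?_
  calc ‖A x‖ = ‖A (P x)‖ := by rw [← comp_apply, hAP]
    _ = ‖P x‖ := hA _ ⟨x, rfl⟩
    _ ≤ 1 * ‖x‖ := P.le_of_opNorm_le hP x

theorem ContinuousLinearMap.norm_map_of_dense [NormedAddCommGroup E] [NormedSpace 𝕜 E]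
    [NormedAddCommGroup F] [NormedSpace 𝕜 F] {A : E →L[𝕜] F} {s : Set E} (hs : Dense s)
    (hA : ∀ x ∈ s, ‖A x‖ = ‖x‖) (x : E) : ‖A x‖ = ‖x‖ :=
  congrFun (Continuous.ext_on hs (by fun_prop) continuous_norm hA) x

variable [NormedAddCommGroup E] [InnerProductSpace 𝕜 E] [CompleteSpace E]
  [NormedAddCommGroup F] [InnerProductSpace 𝕜 F] [CompleteSpace F]

/-- `⟪B x, A x⟫ = ‖B x‖²`, so `‖A x - B x‖² = ‖A x‖² - ‖B x‖² = 0`. -/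
theorem ContinuousLinearMap.apply_eq_of_norm_eq_of_adjoint_apply_eq {A B : E →L[𝕜] F} {x : E}
    (hnorm : ‖A x‖ = ‖B x‖) (hadj : adjoint A (B x) = adjoint B (B x)) : A x = B x := by
  have hinner : RCLike.re (inner 𝕜 (A x) (B x)) = ‖B x‖ ^ 2 := by
    rw [inner_re_symm, ← adjoint_inner_left, hadj, adjoint_inner_left,
      ← inner_self_eq_norm_sq (𝕜 := 𝕜)]
  rw [← sub_eq_zero, ← norm_eq_zero, ← pow_eq_zero_iff two_ne_zero, norm_sub_sq (𝕜 := 𝕜), hinner,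
    hnorm]
  ring

theorem ContinuousLinearMap.adjoint_apply_eq_of_tendsto {ι : Type*} {l : Filter ι} [l.NeBot]
    {g : ι → E →L[𝕜] F} {U : E →L[𝕜] F} (hU : ∀ v, Tendsto (fun i ↦ g i v) l (𝓝 (U v)))
    {x : F} {y : E} (hx : Tendsto (fun i ↦ adjoint (g i) x) l (𝓝 y)) : adjoint U x = y := by
  refine ext_inner_right 𝕜 fun v ↦ ?_
  rw [adjoint_inner_left]
  refine tendsto_nhds_unique ((tendsto_const_nhds (x := x)).inner (𝕜 := 𝕜) (hU v)) ?_
  simpa only [adjoint_inner_left] using hx.inner (𝕜 := 𝕜) (tendsto_const_nhds (x := v))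

end

section

variable {𝕜 H : Type*} [RCLike 𝕜] [NormedAddCommGroup H] [InnerProductSpace 𝕜 H] [CompleteSpace H]

/-- `P n` is the orthogonal projection onto `Hₙ` and `T n` acts on `Hₙ`; each `T (2n+1)` is an
isometric co-extension of `T (2n)`, and each `T (2n+2)` a co-isometric extension of `T (2n+1)`. -/
structure IsAlternatingDilationChain (P T : ℕ → H →L[𝕜] H) : Prop where
  isStarProjection : ∀ n, IsStarProjection (P n)
  mul_of_le : ∀ m n, m ≤ n → P n * P m = P m
  supported : ∀ n, P n * T n = T n ∧ T n * P n = T n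
  norm_apply_odd : ∀ n, ∀ x ∈ LinearMap.range (P (2 * n + 1) : H →ₗ[𝕜] H),
    ‖T (2 * n + 1) x‖ = ‖x‖
  adjoint_apply_odd : ∀ n, ∀ x ∈ LinearMap.range (P (2 * n) : H →ₗ[𝕜] H),
    adjoint (T (2 * n + 1)) x = adjoint (T (2 * n)) x
  norm_adjoint_apply_even : ∀ n, ∀ x ∈ LinearMap.range (P (2 * n + 2) : H →ₗ[𝕜] H),
    ‖adjoint (T (2 * n + 2)) x‖ = ‖x‖
  apply_even : ∀ n, ∀ x ∈ LinearMap.range (P (2 * n + 1) : H →ₗ[𝕜] H),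
    T (2 * n + 2) x = T (2 * n + 1) x

namespace IsAlternatingDilationChain

variable {P T : ℕ → H →L[𝕜] H}

theorem adjoint_proj (hc : IsAlternatingDilationChain P T) (n : ℕ) : adjoint (P n) = P n :=
  (hc.isStarProjection n).isSelfAdjoint.adjoint_eq

theorem mul_of_le' (hc : IsAlternatingDilationChain P T) {m n : ℕ} (h : m ≤ n) :
    P m * P n = P m := by
  simpa only [mul_def, adjoint_comp, hc.adjoint_proj] using congrArg adjoint (hc.mul_of_le m n h)

theorem range_mono (hc : IsAlternatingDilationChain P T) :
    Monotone fun n ↦ LinearMap.range (P n : H →ₗ[𝕜] H) := by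
  rintro m n h _ ⟨y, rfl⟩
  exact ⟨P m y, DFunLike.congr_fun (hc.mul_of_le m n h) y⟩

theorem apply_mem_range (hc : IsAlternatingDilationChain P T) (n : ℕ) (x : H) :
    T n x ∈ LinearMap.range (P n : H →ₗ[𝕜] H) :=
  ⟨T n x, DFunLike.congr_fun (hc.supported n).1 x⟩

theorem adjoint_mul_proj (hc : IsAlternatingDilationChain P T) (n : ℕ) :
    adjoint (T n) * P n = adjoint (T n) := by
  simpa only [mul_def, adjoint_comp, hc.adjoint_proj] using congrArg adjoint (hc.supported n).1

theorem proj_mul_adjoint (hc : IsAlternatingDilationChain P T) (n : ℕ) :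
    P n * adjoint (T n) = adjoint (T n) := by
  simpa only [mul_def, adjoint_comp, hc.adjoint_proj] using congrArg adjoint (hc.supported n).2

theorem adjoint_apply_mem_range (hc : IsAlternatingDilationChain P T) (n : ℕ) (x : H) :
    adjoint (T n) x ∈ LinearMap.range (P n : H →ₗ[𝕜] H) :=
  ⟨adjoint (T n) x, DFunLike.congr_fun (hc.proj_mul_adjoint n) x⟩

theorem norm_le_one (hc : IsAlternatingDilationChain P T) (n : ℕ) : ‖T (n + 1)‖ ≤ 1 := by
  have hP k : ‖P k‖ ≤ 1 := (hc.isStarProjection k).norm_le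
  obtain ⟨k, rfl | rfl⟩ := Nat.even_or_odd' n
  · exact norm_le_one_of_comp_eq (hP _) (hc.supported _).2 (hc.norm_apply_odd k)
  · rw [← adjoint.norm_map]
    exact norm_le_one_of_comp_eq (hP _) (hc.adjoint_mul_proj _) (hc.norm_adjoint_apply_even k)

theorem apply_two_mul_add_three (hc : IsAlternatingDilationChain P T) {n : ℕ} {x : H}
    (hx : x ∈ LinearMap.range (P (2 * n + 1) : H →ₗ[𝕜] H)) :
    T (2 * n + 3) x = T (2 * n + 2) x := by
  refine apply_eq_of_norm_eq_of_adjoint_apply_eq ?_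
    (hc.adjoint_apply_odd (n + 1) _ (hc.apply_mem_range _ x))
  calc ‖T (2 * n + 3) x‖ = ‖x‖ := hc.norm_apply_odd (n + 1) x (hc.range_mono (by omega) hx)
    _ = ‖T (2 * n + 2) x‖ := by rw [hc.apply_even n x hx, hc.norm_apply_odd n x hx]

theorem adjoint_apply_two_mul_add_four (hc : IsAlternatingDilationChain P T) {n : ℕ} {x : H}
    (hx : x ∈ LinearMap.range (P (2 * n + 2) : H →ₗ[𝕜] H)) :
    adjoint (T (2 * n + 4)) x = adjoint (T (2 * n + 3)) x := by
  refine apply_eq_of_norm_eq_of_adjoint_apply_eq ?_ ?_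
  · calc ‖adjoint (T (2 * n + 4)) x‖ = ‖x‖ :=
          hc.norm_adjoint_apply_even (n + 1) x (hc.range_mono (by omega) hx)
      _ = ‖adjoint (T (2 * n + 2)) x‖ := (hc.norm_adjoint_apply_even n x hx).symm
      _ = ‖adjoint (T (2 * n + 3)) x‖ := congrArg norm (hc.adjoint_apply_odd (n + 1) x hx).symm
  · rw [adjoint_adjoint, adjoint_adjoint]
    exact hc.apply_even (n + 1) _ (hc.adjoint_apply_mem_range _ x)

theorem apply_eq_of_le (hc : IsAlternatingDilationChain P T) {k : ℕ} {x : H}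
    (hx : x ∈ LinearMap.range (P (2 * k + 1) : H →ₗ[𝕜] H)) {m : ℕ} (hm : 2 * k + 1 ≤ m) :
    T m x = T (2 * k + 1) x := by
  induction m, hm using Nat.le_induction with
  | base => rfl
  | succ m hm ih =>
    rw [← ih]
    obtain ⟨j, rfl | rfl⟩ := Nat.even_or_odd' m
    · obtain ⟨i, rfl⟩ : ∃ i, j = i + 1 := ⟨j - 1, by omega⟩
      exact hc.apply_two_mul_add_three (hc.range_mono (by omega) hx)
    · exact hc.apply_even j x (hc.range_mono (by omega) hx)

theorem adjoint_apply_eq_of_le (hc : IsAlternatingDilationChain P T) {k : ℕ} {x : H}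
    (hx : x ∈ LinearMap.range (P (2 * k + 2) : H →ₗ[𝕜] H)) {m : ℕ} (hm : 2 * k + 2 ≤ m) :
    adjoint (T m) x = adjoint (T (2 * k + 2)) x := by
  induction m, hm using Nat.le_induction with
  | base => rfl
  | succ m hm ih =>
    rw [← ih]
    obtain ⟨j, rfl | rfl⟩ := Nat.even_or_odd' m
    · exact hc.adjoint_apply_odd j x (hc.range_mono (by omega) hx)
    · obtain ⟨i, rfl⟩ : ∃ i, j = i + 1 := ⟨j - 1, by omega⟩
      exact hc.adjoint_apply_two_mul_add_four (hc.range_mono (by omega) hx)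

theorem exists_tendsto_apply (hc : IsAlternatingDilationChain P T)
    (hdense : Dense (⋃ n, (LinearMap.range (P n : H →ₗ[𝕜] H) : Set H))) :
    ∃ U : H →L[𝕜] H, ∀ x, Tendsto (fun m ↦ T m x) atTop (𝓝 (U x)) := by
  refine exists_tendsto_apply_of_dense (C := 1) (eventually_atTop.mpr ⟨1, fun m hm ↦ ?_⟩)
    hdense ?_
  · obtain ⟨n, rfl⟩ := Nat.exists_eq_add_of_le' hm
    exact hc.norm_le_one n
  · intro y hy
    obtain ⟨n, hn⟩ := Set.mem_iUnion.mp hy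
    exact (tendsto_atTop_of_eventually_const fun m hm ↦
      hc.apply_eq_of_le (hc.range_mono (by omega : n ≤ 2 * n + 1) hn) hm).cauchySeq

variable {U : H →L[𝕜] H}

theorem apply_eq_of_tendsto (hc : IsAlternatingDilationChain P T)
    (hU : ∀ x, Tendsto (fun m ↦ T m x) atTop (𝓝 (U x))) {k : ℕ} {x : H}
    (hx : x ∈ LinearMap.range (P (2 * k + 1) : H →ₗ[𝕜] H)) : U x = T (2 * k + 1) x :=
  tendsto_nhds_unique (hU x) (tendsto_atTop_of_eventually_const fun _ ↦ hc.apply_eq_of_le hx)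

theorem adjoint_apply_eq_of_tendsto (hc : IsAlternatingDilationChain P T)
    (hU : ∀ x, Tendsto (fun m ↦ T m x) atTop (𝓝 (U x))) {k : ℕ} {x : H}
    (hx : x ∈ LinearMap.range (P (2 * k + 2) : H →ₗ[𝕜] H)) :
    adjoint U x = adjoint (T (2 * k + 2)) x :=
  ContinuousLinearMap.adjoint_apply_eq_of_tendsto hU
    (tendsto_atTop_of_eventually_const fun _ ↦ hc.adjoint_apply_eq_of_le hx)

theorem norm_apply_of_tendsto (hc : IsAlternatingDilationChain P T)
    (hdense : Dense (⋃ n, (LinearMap.range (P n : H →ₗ[𝕜] H) : Set H)))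
    (hU : ∀ x, Tendsto (fun m ↦ T m x) atTop (𝓝 (U x))) (x : H) : ‖U x‖ = ‖x‖ := by
  refine norm_map_of_dense hdense (fun y hy ↦ ?_) x
  obtain ⟨n, hn⟩ := Set.mem_iUnion.mp hy
  have hn' := hc.range_mono (by omega : n ≤ 2 * n + 1) hn
  rw [hc.apply_eq_of_tendsto hU hn', hc.norm_apply_odd n y hn']

theorem norm_adjoint_apply_of_tendsto (hc : IsAlternatingDilationChain P T)
    (hdense : Dense (⋃ n, (LinearMap.range (P n : H →ₗ[𝕜] H) : Set H)))
    (hU : ∀ x, Tendsto (fun m ↦ T m x) atTop (𝓝 (U x))) (x : H) : ‖adjoint U x‖ = ‖x‖ := by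
  refine norm_map_of_dense hdense (fun y hy ↦ ?_) x
  obtain ⟨n, hn⟩ := Set.mem_iUnion.mp hy
  have hn' := hc.range_mono (by omega : n ≤ 2 * n + 2) hn
  rw [hc.adjoint_apply_eq_of_tendsto hU hn', hc.norm_adjoint_apply_even n y hn']

theorem semiconjBy_proj_zero (hc : IsAlternatingDilationChain P T) :
    SemiconjBy (P 0) (T 1) (T 0) := by
  rw [SemiconjBy, (hc.supported 0).2, ← (hc.supported 0).1]
  refine adjoint.injective (ext fun x ↦ ?_)
  simp only [mul_def, adjoint_comp, hc.adjoint_proj, comp_apply]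
  exact hc.adjoint_apply_odd 0 _ ⟨x, rfl⟩

theorem semiconjBy_proj_one_of_tendsto (hc : IsAlternatingDilationChain P T)
    (hU : ∀ x, Tendsto (fun m ↦ T m x) atTop (𝓝 (U x))) : SemiconjBy (P 1) (T 1) U := by
  refine ext fun x ↦ ?_
  change P 1 (T 1 x) = U (P 1 x)
  rw [hc.apply_eq_of_tendsto hU (k := 0) (x := P 1 x) ⟨x, rfl⟩]
  exact (DFunLike.congr_fun (hc.supported 1).1 x).trans
    (DFunLike.congr_fun (hc.supported 1).2 x).symm

/-- `U ^ k` compresses to `T 1 ^ k` on `H₁`, which compresses to `T 0 ^ k` on `H₀`. -/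
theorem compression_pow_of_tendsto (hc : IsAlternatingDilationChain P T)
    (hU : ∀ x, Tendsto (fun m ↦ T m x) atTop (𝓝 (U x))) (k : ℕ) :
    P 0 * U ^ k * P 0 = T 0 ^ k * P 0 := by
  calc P 0 * U ^ k * P 0 = P 0 * (U ^ k * P 1) * P 0 := by
        simp only [mul_assoc, hc.mul_of_le 0 1 zero_le_one]
    _ = P 0 * P 1 * T 1 ^ k * P 0 := by
        rw [← ((hc.semiconjBy_proj_one_of_tendsto hU).pow_right k).eq]
        simp only [mul_assoc]
    _ = T 0 ^ k * P 0 * P 0 := by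
        rw [hc.mul_of_le' zero_le_one, (hc.semiconjBy_proj_zero.pow_right k).eq]
    _ = T 0 ^ k * P 0 := by rw [mul_assoc, (hc.isStarProjection 0).isIdempotentElem.eq]

theorem dense_iUnion_range (hc : IsAlternatingDilationChain P T)
    (hdense : (⨆ n, LinearMap.range (P n : H →ₗ[𝕜] H)).topologicalClosure = ⊤) :
    Dense (⋃ n, (LinearMap.range (P n : H →ₗ[𝕜] H) : Set H)) := by
  rw [← Submodule.coe_iSup_of_directed _ hc.range_mono.directed_le]
  exact Submodule.dense_iff_topologicalClosure_eq_top.mpr hdense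

end IsAlternatingDilationChain

end

theorem stmt10_general {H : Type*} [NormedAddCommGroup H] [InnerProductSpace ℂ H] [CompleteSpace H]
    (P T : ℕ → H →L[ℂ] H)
    (hPproj : ∀ n, IsIdempotentElem (P n)) (hPsa : ∀ n, IsSelfAdjoint (P n))
    (hPmono : ∀ m n, m ≤ n → P n ∘L P m = P m)
    (hdense : (⨆ n, LinearMap.range (P n : H →ₗ[ℂ] H)).topologicalClosure = ⊤)
    (hsupp : ∀ n, P n ∘L T n = T n ∧ T n ∘L P n = T n)
    (hodd_iso : ∀ n, ∀ x ∈ LinearMap.range (P (2 * n + 1) : H →ₗ[ℂ] H), ‖T (2 * n + 1) x‖ = ‖x‖)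
    (hodd_coext : ∀ n, ∀ h ∈ LinearMap.range (P (2 * n) : H →ₗ[ℂ] H),
      adjoint (T (2 * n + 1)) h = adjoint (T (2 * n)) h)
    (heven_coiso : ∀ n, ∀ x ∈ LinearMap.range (P (2 * n + 2) : H →ₗ[ℂ] H),
      ‖adjoint (T (2 * n + 2)) x‖ = ‖x‖)
    (heven_ext : ∀ n, ∀ h ∈ LinearMap.range (P (2 * n + 1) : H →ₗ[ℂ] H),
      T (2 * n + 2) h = T (2 * n + 1) h) :
    ∃ U : H →L[ℂ] H,
      (∀ x : H, ‖U x‖ = ‖x‖) ∧ (∀ x : H, ‖adjoint U x‖ = ‖x‖) ∧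
      (∀ k, ∀ h ∈ LinearMap.range (P 0 : H →ₗ[ℂ] H), P 0 ((U ^ k) h) = ((T 0 ^ k) h)) := by
  have hc : IsAlternatingDilationChain P T :=
    ⟨fun n ↦ ⟨hPproj n, hPsa n⟩, hPmono, hsupp, hodd_iso, hodd_coext, heven_coiso, heven_ext⟩
  have hs := hc.dense_iUnion_range hdense
  obtain ⟨U, hU⟩ := hc.exists_tendsto_apply hs
  refine ⟨U, hc.norm_apply_of_tendsto hs hU, hc.norm_adjoint_apply_of_tendsto hs hU, ?_⟩
  rintro k _ ⟨y, rfl⟩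
  exact DFunLike.congr_fun (hc.compression_pow_of_tendsto hU k) y

/-- If a contraction `T 0` admits an infinite alternating chain of isometric
co-extensions (odd steps) and co-isometric extensions (even steps) on increasing closed
subspaces `H_n = range (P n)` of the ambient space, then `T 0` has a unitary power
dilation `U`. -/
theorem stmt10 {H : Type*} [NormedAddCommGroup H] [InnerProductSpace ℂ H] [CompleteSpace H]
    (P T : ℕ → H →L[ℂ] H)
    (hPproj : ∀ n, IsIdempotentElem (P n)) (hPsa : ∀ n, IsSelfAdjoint (P n))
    (hPmono : ∀ m n, m ≤ n → P n ∘L P m = P m)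
    (hdense : (⨆ n, LinearMap.range (P n : H →ₗ[ℂ] H)).topologicalClosure = ⊤)
    (hsupp : ∀ n, P n ∘L T n = T n ∧ T n ∘L P n = T n)
    (hcontr : ‖T 0‖ ≤ 1)
    (hodd_iso : ∀ n, ∀ x ∈ LinearMap.range (P (2 * n + 1) : H →ₗ[ℂ] H), ‖T (2 * n + 1) x‖ = ‖x‖)
    (hodd_coext : ∀ n, ∀ h ∈ LinearMap.range (P (2 * n) : H →ₗ[ℂ] H),
      adjoint (T (2 * n + 1)) h = adjoint (T (2 * n)) h)
    (heven_coiso : ∀ n, ∀ x ∈ LinearMap.range (P (2 * n + 2) : H →ₗ[ℂ] H),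
      ‖adjoint (T (2 * n + 2)) x‖ = ‖x‖)
    (heven_ext : ∀ n, ∀ h ∈ LinearMap.range (P (2 * n + 1) : H →ₗ[ℂ] H),
      T (2 * n + 2) h = T (2 * n + 1) h) :
    ∃ U : H →L[ℂ] H,
      (∀ x : H, ‖U x‖ = ‖x‖) ∧ (∀ x : H, ‖adjoint U x‖ = ‖x‖) ∧
      (∀ k, ∀ h ∈ LinearMap.range (P 0 : H →ₗ[ℂ] H), P 0 ((U ^ k) h) = ((T 0 ^ k) h)) :=
  stmt10_general P T hPproj hPsa hPmono hdense hsupp hodd_iso hodd_coext heven_coiso heven_ext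
end

section
/- Given W*-correspondences E_s, E_t over M and co-isometric bimodule maps U_{s,t} : E_s ⊗ E_t → E_{st} and U_{t,s} : E_t ⊗ E_s → E_{st}, the block operator f_{s,t} on (E_s ⊗ E_t) ⊕ (E_t ⊗ E_s) ⊕ R given matricially by [[U_{t,s}* U_{s,t}, 1 − U_{t,s}* U_{t,s}, 0], [1 − U_{s,t}* U_{s,t}, U_{s,t}* U_{t,s}, 0], [0, 0, 1]] is a unitary bimodule map, and f_{s,t}* = f_{t,s}. -/
open ContinuousLinearMap

/-- The Hilbert-sum `(X ⊕ Y) ⊕ Z` with the ℓ²-inner product. -/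
abbrev Sum3 (X Y Z : Type*) := WithLp 2 (WithLp 2 (X × Y) × Z)

/-- The element `(x, y, z)` of the Hilbert sum. -/
noncomputable def mk3 {X Y Z : Type*} (x : X) (y : Y) (z : Z) : Sum3 X Y Z :=
  (WithLp.equiv 2 (WithLp 2 (X × Y) × Z)).symm ((WithLp.equiv 2 (X × Y)).symm (x, y), z)

noncomputable def pr1 {X Y Z : Type*} (v : Sum3 X Y Z) : X :=
  ((WithLp.equiv 2 (X × Y)) ((WithLp.equiv 2 (WithLp 2 (X × Y) × Z)) v).1).1

noncomputable def pr2 {X Y Z : Type*} (v : Sum3 X Y Z) : Y :=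
  ((WithLp.equiv 2 (X × Y)) ((WithLp.equiv 2 (WithLp 2 (X × Y) × Z)) v).1).2

noncomputable def pr3 {X Y Z : Type*} (v : Sum3 X Y Z) : Z :=
  ((WithLp.equiv 2 (WithLp 2 (X × Y) × Z)) v).2

/-! The flips `f` for `(U, V)` and `g` for `(V, U)` have block matrices that are conjugate
transposes of each other, so `f* = g` whatever `U` and `V` are. In `g f` every entry collapses by
`U U* = 1` and `V V* = 1` (e.g. `U* V V* U = U* U` and `(1 − U* U) U* V = 0`), so `g f = 1`, and
symmetrically `f g = 1`. -/

section Sum3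

variable {X Y Z : Type*}

@[simp] lemma pr1_mk3 (x : X) (y : Y) (z : Z) : pr1 (mk3 x y z) = x := rfl
@[simp] lemma pr2_mk3 (x : X) (y : Y) (z : Z) : pr2 (mk3 x y z) = y := rfl
@[simp] lemma pr3_mk3 (x : X) (y : Y) (z : Z) : pr3 (mk3 x y z) = z := rfl

lemma mk3_pr (v : Sum3 X Y Z) : mk3 (pr1 v) (pr2 v) (pr3 v) = v := rfl

variable [NormedAddCommGroup X] [InnerProductSpace ℂ X]
  [NormedAddCommGroup Y] [InnerProductSpace ℂ Y]
  [NormedAddCommGroup Z] [InnerProductSpace ℂ Z]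

lemma inner_mk3 (x x' : X) (y y' : Y) (z z' : Z) :
    inner ℂ (mk3 x y z) (mk3 x' y' z') = inner ℂ x x' + inner ℂ y y' + inner ℂ z z' := by
  simp [mk3, WithLp.prod_inner_apply]

end Sum3

section Flip

variable {A B R C : Type*}
  [NormedAddCommGroup A] [InnerProductSpace ℂ A] [CompleteSpace A]
  [NormedAddCommGroup B] [InnerProductSpace ℂ B] [CompleteSpace B]
  [NormedAddCommGroup R] [InnerProductSpace ℂ R]
  [NormedAddCommGroup C] [InnerProductSpace ℂ C] [CompleteSpace C]

/-- `f` acts on `A ⊕ B ⊕ R → B ⊕ A ⊕ R` as the block matrix `[[V*U, 1 − V*V, 0], [1 − U*U, U*V, 0],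
[0, 0, 1]]`. -/
def IsFlip (U : A →L[ℂ] C) (V : B →L[ℂ] C) (f : Sum3 A B R →L[ℂ] Sum3 B A R) : Prop :=
  ∀ x y z, f (mk3 x y z) =
    mk3 (adjoint V (U x) + (y - adjoint V (V y))) ((x - adjoint U (U x)) + adjoint U (V y)) z

lemma apply_adjoint_of_comp_adjoint_eq_one {U : A →L[ℂ] C} (hU : U ∘L adjoint U = 1) (c : C) :
    U (adjoint U c) = c :=
  congr($hU c)

namespace IsFlip

variable {U : A →L[ℂ] C} {V : B →L[ℂ] C}
  {f : Sum3 A B R →L[ℂ] Sum3 B A R} {g : Sum3 B A R →L[ℂ] Sum3 A B R}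

lemma adjoint_eq [CompleteSpace R] (hf : IsFlip U V f) (hg : IsFlip V U g) : adjoint f = g := by
  refine ((eq_adjoint_iff g f).mpr fun v w => ?_).symm
  rw [← mk3_pr v, ← mk3_pr w, hf, hg, inner_mk3, inner_mk3]
  simp only [inner_add_left, inner_add_right, inner_sub_left, inner_sub_right,
    adjoint_inner_left, adjoint_inner_right]
  ring

lemma comp_eq_one (hU : U ∘L adjoint U = 1) (hV : V ∘L adjoint V = 1)
    (hf : IsFlip U V f) (hg : IsFlip V U g) : g ∘L f = 1 := by
  have hUU := apply_adjoint_of_comp_adjoint_eq_one hU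
  have hVV := apply_adjoint_of_comp_adjoint_eq_one hV
  ext1 v
  rw [← mk3_pr v, comp_apply, hf, hg, one_apply_eq_self]
  congr 1 <;> simp only [map_add, map_sub, hUU, hVV] <;> abel

lemma map_mk3 (hf : IsFlip U V f) {SA : A →L[ℂ] A} {SB : B →L[ℂ] B} {SC : C →L[ℂ] C}
    (hUS : U ∘L SA = SC ∘L U) (hVS : V ∘L SB = SC ∘L V)
    (hUS' : adjoint U ∘L SC = SA ∘L adjoint U) (hVS' : adjoint V ∘L SC = SB ∘L adjoint V)
    (SR : R → R) (x : A) (y : B) (z : R) :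
    f (mk3 (SA x) (SB y) (SR z)) =
      mk3 (SB (pr1 (f (mk3 x y z)))) (SA (pr2 (f (mk3 x y z)))) (SR (pr3 (f (mk3 x y z)))) := by
  have hU : ∀ x, U (SA x) = SC (U x) := fun x => congr($hUS x)
  have hV : ∀ y, V (SB y) = SC (V y) := fun y => congr($hVS y)
  have hU' : ∀ c, adjoint U (SC c) = SA (adjoint U c) := fun c => congr($hUS' c)
  have hV' : ∀ c, adjoint V (SC c) = SB (adjoint V c) := fun c => congr($hVS' c)
  rw [hf, hf]
  simp only [pr1_mk3, pr2_mk3, pr3_mk3, map_add, map_sub, hU, hV, hU', hV']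

end IsFlip

end Flip

/-- The matricial flip operator built from two co-isometries `U : A → C`, `V : B → C`
(think `A = E_s ⊗ E_t`, `B = E_t ⊗ E_s`, `C = E_{st}`, `R` the common remainder):
the block operator `[[V*U, 1 − V*V, 0], [1 − U*U, U*V, 0], [0,0,1]]` from
`A ⊕ B ⊕ R` to `B ⊕ A ⊕ R` is a unitary bimodule map (it intertwines any families of
module actions intertwined by `U` and `V`), and its adjoint is the corresponding flip
with the roles of `s` and `t` reversed. -/
theorem stmt13 {A B R C M : Type*}
    [NormedAddCommGroup A] [InnerProductSpace ℂ A] [CompleteSpace A]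
    [NormedAddCommGroup B] [InnerProductSpace ℂ B] [CompleteSpace B]
    [NormedAddCommGroup R] [InnerProductSpace ℂ R] [CompleteSpace R]
    [NormedAddCommGroup C] [InnerProductSpace ℂ C] [CompleteSpace C]
    (U : A →L[ℂ] C) (V : B →L[ℂ] C)
    (hU : U ∘L adjoint U = 1) (hV : V ∘L adjoint V = 1)
    (LA : M → A →L[ℂ] A) (LB : M → B →L[ℂ] B) (LR : M → R →L[ℂ] R) (LC : M → C →L[ℂ] C)
    (hUL : ∀ a, U ∘L LA a = LC a ∘L U) (hVL : ∀ a, V ∘L LB a = LC a ∘L V)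
    (hUL' : ∀ a, adjoint U ∘L LC a = LA a ∘L adjoint U)
    (hVL' : ∀ a, adjoint V ∘L LC a = LB a ∘L adjoint V)
    (f : Sum3 A B R →L[ℂ] Sum3 B A R) (f' : Sum3 B A R →L[ℂ] Sum3 A B R)
    (hf : ∀ (x : A) (y : B) (z : R),
      f (mk3 x y z) =
        mk3 (adjoint V (U x) + (y - adjoint V (V y)))
            ((x - adjoint U (U x)) + adjoint U (V y)) z)
    (hf' : ∀ (y : B) (x : A) (z : R),
      f' (mk3 y x z) =
        mk3 (adjoint U (V y) + (x - adjoint U (U x)))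
            ((y - adjoint V (V y)) + adjoint V (U x)) z) :
    adjoint f = f' ∧
    adjoint f ∘L f = 1 ∧ f ∘L adjoint f = 1 ∧
    (∀ (a : M) (x : A) (y : B) (z : R),
      f (mk3 (LA a x) (LB a y) (LR a z)) =
        mk3 (LB a (pr1 (f (mk3 x y z)))) (LA a (pr2 (f (mk3 x y z))))
            (LR a (pr3 (f (mk3 x y z))))) := by
  have hflip : IsFlip U V f := hf
  have hflip' : IsFlip V U f' := hf'
  have hadj := hflip.adjoint_eq hflip'
  refine ⟨hadj, ?_, ?_, fun a => hflip.map_mk3 (hUL a) (hVL a) (hUL' a) (hVL' a) (LR a)⟩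
  · rw [hadj]
    exact hflip.comp_eq_one hU hV hflip'
  · rw [hadj]
    exact hflip'.comp_eq_one hV hU hflip
end

section
/- Path shortening in the presentation graph: if two presentations v1 = u·w and v2 = u'·w of the same word s ∈ S(G) share a common suffix w, then u and u' are equivalent in S(G), and there is a path in the presentation graph H(s) from v1 to v2 all of whose vertices have suffix w (i.e., induced by a path in H(u) from u to u'); moreover such a path realizes the minimal distance from v1 to v2. -/
/-- `f` is a path of length `n` from `r` to `s` in the presentation graph `H(s)`. -/
def IsSwapPath {V : Type*} (G : SimpleGraph V) (f : ℕ → List V) (n : ℕ) (r s : List V) : Prop :=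
  f 0 = r ∧ f n = s ∧ ∀ i < n, SwapRel G (f i) (f (i + 1))

inductive PathN {V : Type*} (G : SimpleGraph V) : ℕ → List V → List V → Prop
  | refl (r : List V) : PathN G 0 r r
  | cons {n r s t} : SwapRel G r s → PathN G n s t → PathN G (n + 1) r t

/-- step analysis: tracking the last occurrence of `c`. -/
theorem swap_track {V : Type*} {G : SimpleGraph V} {p q y : List V} {c : V}
    (hs : SwapRel G (p ++ c :: q) y) (hc : c ∉ q) :
    ∃ p₂ q₂, y = p₂ ++ c :: q₂ ∧ c ∉ q₂ ∧
      (SwapRel G (p ++ q) (p₂ ++ q₂) ∨ p ++ q = p₂ ++ q₂) := by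
  obtain ⟨w₁, w₂, a, b, hab, h1, h2⟩ := hs
  rcases List.append_eq_append_iff.mp h1 with ⟨t, ht1, ht2⟩ | ⟨t, ht1, ht2⟩
  · -- w₁ = p ++ t, c :: q = t ++ a :: b :: w₂
    cases t with
    | nil =>
      simp only [List.nil_append] at ht2
      simp only [List.append_nil] at ht1
      obtain ⟨rfl, rfl⟩ : c = a ∧ q = b :: w₂ := by
        constructor <;> [exact (List.cons.injEq _ _ _ _ ▸ ht2).1;
          exact (List.cons.injEq _ _ _ _ ▸ ht2).2]
      refine ⟨w₁ ++ [b], w₂, ?_, ?_, Or.inr ?_⟩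
      · simpa using h2
      · simp at hc; tauto
      · rw [ht1]; simp
    | cons x t' =>
      obtain ⟨rfl, rfl⟩ : c = x ∧ q = t' ++ a :: b :: w₂ := by
        constructor <;> [exact (List.cons.injEq _ _ _ _ ▸ ht2).1;
          exact (List.cons.injEq _ _ _ _ ▸ ht2).2]
      subst ht1
      refine ⟨p, t' ++ b :: a :: w₂, ?_, ?_, Or.inl ⟨p ++ t', w₂, a, b, hab, ?_, ?_⟩⟩
      · simpa using h2
      · simp at hc ⊢; tauto
      · simp
      · simp
  · -- p = w₁ ++ t, a :: b :: w₂ = t ++ c :: q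
    cases t with
    | nil =>
      simp only [List.nil_append] at ht2
      simp only [List.append_nil] at ht1
      obtain ⟨rfl, rfl⟩ : a = c ∧ b :: w₂ = q := by
        constructor <;> [exact (List.cons.injEq _ _ _ _ ▸ ht2).1;
          exact (List.cons.injEq _ _ _ _ ▸ ht2).2]
      refine ⟨w₁ ++ [b], w₂, ?_, ?_, Or.inr ?_⟩
      · simpa using h2
      · simp at hc; tauto
      · rw [ht1]; simp
    | cons x t' =>
      obtain ⟨rfl, ht2'⟩ : a = x ∧ b :: w₂ = t' ++ c :: q := by
        constructor <;> [exact (List.cons.injEq _ _ _ _ ▸ ht2).1;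
          exact (List.cons.injEq _ _ _ _ ▸ ht2).2]
      cases t' with
      | nil =>
        simp only [List.nil_append] at ht2'
        obtain ⟨rfl, rfl⟩ : b = c ∧ w₂ = q := by
          constructor <;> [exact (List.cons.injEq _ _ _ _ ▸ ht2').1;
            exact (List.cons.injEq _ _ _ _ ▸ ht2').2]
        refine ⟨w₁, a :: w₂, ?_, ?_, Or.inr ?_⟩
        · simpa using h2
        · simp [hc, (G.ne_of_adj hab).symm]
        · rw [ht1]; simp
      | cons x' t'' =>
        obtain ⟨rfl, rfl⟩ : b = x' ∧ w₂ = t'' ++ c :: q := by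
          constructor <;> [exact (List.cons.injEq _ _ _ _ ▸ ht2').1;
            exact (List.cons.injEq _ _ _ _ ▸ ht2').2]
        subst ht1
        refine ⟨w₁ ++ b :: a :: t'', q, ?_, hc, Or.inl ⟨w₁, t'' ++ q, a, b, hab, ?_, ?_⟩⟩
        · simpa using h2
        · simp
        · simp

theorem pathN_track {V : Type*} {G : SimpleGraph V} {c : V} :
    ∀ {n : ℕ} {r s : List V} (_ : PathN G n r s) {p q : List V}, r = p ++ c :: q → c ∉ q →
      ∃ p' q' m, s = p' ++ c :: q' ∧ c ∉ q' ∧ m ≤ n ∧ PathN G m (p ++ q) (p' ++ q') := by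
  intro n r s hpath
  induction hpath with
  | refl r => exact fun {p q} hr hc => ⟨p, q, 0, hr, hc, le_refl _, PathN.refl _⟩
  | cons hs _ ih =>
    intro p q hr hc
    subst hr
    obtain ⟨p₂, q₂, hy, hc₂, hstep⟩ := swap_track hs hc
    obtain ⟨p', q', m, hfin, hc', hm, hpath'⟩ := ih hy hc₂
    rcases hstep with hstep | heq
    · exact ⟨p', q', m + 1, hfin, hc', by omega, PathN.cons hstep hpath'⟩
    · exact ⟨p', q', m, hfin, hc', by omega, heq ▸ hpath'⟩

/-- strip a single common last letter. -/
theorem pathN_strip_one {V : Type*} {G : SimpleGraph V} {c : V} {n : ℕ} {u u' : List V}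
    (h : PathN G n (u ++ [c]) (u' ++ [c])) : ∃ m ≤ n, PathN G m u u' := by
  obtain ⟨p', q', m, hfin, hc', hm, hpath⟩ := pathN_track h (p := u) (q := []) rfl (by simp)
  -- u' ++ [c] = p' ++ c :: q', c ∉ q' ⇒ q' = []
  have hq' : q' = [] := by
    rcases List.eq_nil_or_concat q' with rfl | ⟨q'', d, rfl⟩
    · rfl
    · exfalso
      have h1 : (u' ++ [c]).getLast? = some c := by
        simp
      have h2 : (p' ++ c :: (q'' ++ [d])).getLast? = some d := by
        rw [List.getLast?_append, show (c :: (q'' ++ [d])) = (c :: q'') ++ [d] by simp,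
          List.getLast?_append]
        simp
      rw [hfin] at h1
      simp only [List.concat_eq_append] at h1
      rw [h1] at h2
      simp only [Option.some.injEq] at h2
      exact hc' (by simp [h2])
  subst hq'
  have hp' : p' = u' := by
    have := hfin
    exact List.append_left_injective [c] |>.eq_iff.mp this.symm |>.symm ▸ rfl
  subst hp'
  exact ⟨m, hm, by simpa using hpath⟩

/-- strip a common suffix. -/
theorem pathN_strip {V : Type*} {G : SimpleGraph V} (w : List V) :
    ∀ {n : ℕ} {u u' : List V}, PathN G n (u ++ w) (u' ++ w) → ∃ m ≤ n, PathN G m u u' := by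
  induction w using List.reverseRecOn with
  | nil => exact fun h => ⟨_, le_refl _, by simpa using h⟩
  | append_singleton ws c ih =>
    intro n u u' h
    simp only [← List.append_assoc] at h
    obtain ⟨m, hm, h'⟩ := pathN_strip_one h
    obtain ⟨m', hm', h''⟩ := ih h'
    exact ⟨m', le_trans hm' hm, h''⟩

theorem pathN_append {V : Type*} {G : SimpleGraph V} (w : List V) :
    ∀ {n : ℕ} {u u' : List V}, PathN G n u u' → PathN G n (u ++ w) (u' ++ w) := by
  intro n u u' h
  induction h with
  | refl => exact PathN.refl _
  | cons hs _ ih =>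
    obtain ⟨w₁, w₂, a, b, hab, h1, h2⟩ := hs
    exact PathN.cons ⟨w₁, w₂ ++ w, a, b, hab, by simp [h1], by simp [h2]⟩ ih

theorem pathN_of_rtg {V : Type*} {G : SimpleGraph V} {u u' : List V}
    (h : Relation.ReflTransGen (SwapRel G) u u') : ∃ n, PathN G n u u' := by
  induction h with
  | refl => exact ⟨0, PathN.refl _⟩
  | tail _ hs ih =>
    obtain ⟨n, hn⟩ := ih
    clear * - hn hs
    induction hn with
    | refl => exact ⟨1, PathN.cons hs (PathN.refl _)⟩
    | cons hs' _ ih' =>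
      obtain ⟨m, hm⟩ := ih' hs
      exact ⟨m + 1, PathN.cons hs' hm⟩

theorem rtg_of_pathN {V : Type*} {G : SimpleGraph V} {n : ℕ} {u u' : List V}
    (h : PathN G n u u') : Relation.ReflTransGen (SwapRel G) u u' := by
  induction h with
  | refl => exact Relation.ReflTransGen.refl
  | cons hs _ ih => exact Relation.ReflTransGen.head hs ih

theorem swapRel_append {V : Type*} {G : SimpleGraph V} {x y : List V} (w : List V)
    (h : SwapRel G x y) : SwapRel G (x ++ w) (y ++ w) := by
  obtain ⟨w₁, w₂, a, b, hab, h1, h2⟩ := h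
  exact ⟨w₁, w₂ ++ w, a, b, hab, by simp [h1], by simp [h2]⟩

theorem pathN_of_isSwapPath {V : Type*} {G : SimpleGraph V} :
    ∀ {n : ℕ} {f : ℕ → List V} {r s : List V}, IsSwapPath G f n r s → PathN G n r s := by
  intro n
  induction n with
  | zero => rintro f r s ⟨h0, hn, _⟩; rw [← h0, hn]; exact PathN.refl _
  | succ n ih =>
    rintro f r s ⟨h0, hn, hstep⟩
    refine PathN.cons (h0 ▸ hstep 0 (Nat.succ_pos n)) (ih (f := fun i => f (i + 1)) ⟨rfl, hn, ?_⟩)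
    exact fun i hi => hstep (i + 1) (by omega)

theorem isSwapPath_of_pathN {V : Type*} {G : SimpleGraph V} {n : ℕ} {r s : List V}
    (h : PathN G n r s) : ∃ f, IsSwapPath G f n r s := by
  induction h with
  | refl r => exact ⟨fun _ => r, rfl, rfl, fun i hi => absurd hi (by omega)⟩
  | @cons n r s t hs hp ih =>
    obtain ⟨f', h0, hn, hstep⟩ := ih
    refine ⟨fun i => if i = 0 then r else f' (i - 1), by simp, by simp [hn], ?_⟩
    intro i hi
    cases i with
    | zero => simpa [h0] using hs
    | succ j => simpa using hstep j (by omega)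


/-- Path shortening in the presentation graph: if two presentations `u ++ w` and `u' ++ w`
of the same word share the common suffix `w`, then `u ∼ u'`, and there is a path in the
presentation graph from `u ++ w` to `u' ++ w` all of whose vertices have suffix `w`
which moreover realizes the minimal distance. -/
theorem stmt15 {V : Type*} (G : SimpleGraph V) (u u' w : List V)
    (h : Relation.ReflTransGen (SwapRel G) (u ++ w) (u' ++ w)) :
    Relation.ReflTransGen (SwapRel G) u u' ∧
    ∃ (m : ℕ) (f : ℕ → List V),
      IsSwapPath G f m (u ++ w) (u' ++ w) ∧
      (∀ i ≤ m, ∃ x : List V, f i = x ++ w) ∧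
      (∀ (n : ℕ) (g : ℕ → List V), IsSwapPath G g n (u ++ w) (u' ++ w) → m ≤ n) := by
  obtain ⟨N, hN⟩ := pathN_of_rtg h
  obtain ⟨m₀, _, hp₀⟩ := pathN_strip w hN
  have hex : ∃ m, PathN G m u u' := ⟨m₀, hp₀⟩
  constructor
  · exact rtg_of_pathN hp₀
  · classical
    refine ⟨Nat.find hex, ?_⟩
    obtain ⟨f₀, h0, hn, hstep⟩ := isSwapPath_of_pathN (Nat.find_spec hex)
    refine ⟨fun i => f₀ i ++ w, ⟨by simp [h0], by simp [hn], fun i hi => swapRel_append w (hstep i hi)⟩,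
      fun i _ => ⟨f₀ i, rfl⟩, ?_⟩
    intro n g hg
    obtain ⟨m', hm', hp'⟩ := pathN_strip w (pathN_of_isSwapPath hg)
    exact le_trans (Nat.find_min' hex hp') hm'
end

section
/- Uniqueness of flip composites (combinatorial lemma): let G be a triangle-free graph, S(G) the free semigroup with relations in G, {E_a} W*-correspondences indexed by letters, and {f_{a,b}} a unitary flip system (unitary bimodule maps f_{a,b}: E_a ⊗ E_b → E_b ⊗ E_a with f_{a,b}* = f_{b,a} for each edge {a,b}). For every path p in the presentation graph H(s) define f_p as the composition of the maps I ⊗ f_{a,b} ⊗ I along its edges. Then for every cycle c in H(s), f_c is the identity map; equivalently, f_p depends only on the endpoints of p. -/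
/-- Paths in the presentation graph `H(s)`: finite chains of elementary swaps. -/
inductive SwapPath {V : Type*} (G : SimpleGraph V) : List V → List V → Type _ where
  | nil (u : List V) : SwapPath G u u
  | cons {u v w : List V} (h : SwapRel G u v) (p : SwapPath G v w) : SwapPath G u w

/-- The composite of the elementary flip maps along a path. -/
noncomputable def pathMap {V : Type*} {G : SimpleGraph V} (EW : List V → Type*)
    [∀ w, NormedAddCommGroup (EW w)] [∀ w, InnerProductSpace ℂ (EW w)]
    (F : ∀ u v : List V, SwapRel G u v → (EW u ≃ₗᵢ[ℂ] EW v)) :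
    ∀ {u v : List V}, SwapPath G u v → (EW u ≃ₗᵢ[ℂ] EW v)
  | _, _, SwapPath.nil u => LinearIsometryEquiv.refl ℂ (EW u)
  | _, _, SwapPath.cons h p => (F _ _ h).trans (pathMap EW F p)

/-!
Call two paths of `H(s)` homotopic when they differ by backtracks `u → v → u` and by the two
sides of commutation squares. The hypotheses on the flips say precisely that `pathMap` is
invariant under homotopy, so it suffices to show that any two paths with the same ends are
homotopic.

Fix a linear order on the letters and join every word by a canonical path to a normal form: a list
of blocks built by inserting the letters from right to left, where a letter slides over the
blocks all of whose letters commute with it and joins the last of these in sorted position (or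
starts a new first block). A swap at the front of a word slides along the canonical path of the
rest through commutation squares, and inserting two commuting letters in either order gives the
same blocks along homotopic paths, because in a triangle-free graph at most one of two adjacent
letters commutes with a given block. Hence a swap followed by a canonical path is homotopic to
the canonical path of its source, so every path `p : u → v` followed by the canonical path of
`v` is homotopic to the canonical path of `u`, and `p` is determined up to homotopy by its ends.
-/

section

variable {V : Type*} {G : SimpleGraph V}

namespace SwapRel

theorem of_adj (w₁ : List V) {a b : V} (w₂ : List V) (h : G.Adj a b) :
    SwapRel G (w₁ ++ a :: b :: w₂) (w₁ ++ b :: a :: w₂) :=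
  ⟨w₁, w₂, a, b, h, rfl, rfl⟩

theorem cons (c : V) {u v : List V} (h : SwapRel G u v) : SwapRel G (c :: u) (c :: v) := by
  obtain ⟨w₁, w₂, a, b, hab, rfl, rfl⟩ := h
  exact of_adj (c :: w₁) w₂ hab

theorem symm {u v : List V} (h : SwapRel G u v) : SwapRel G v u := by
  obtain ⟨w₁, w₂, a, b, hab, rfl, rfl⟩ := h
  exact of_adj w₁ w₂ hab.symm

end SwapRel

namespace SwapPath

def trans {u v w : List V} : SwapPath G u v → SwapPath G v w → SwapPath G u w
  | .nil _, q => q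
  | .cons h p, q => .cons h (p.trans q)

def single {u v : List V} (h : SwapRel G u v) : SwapPath G u v := .cons h (.nil v)

def reverse {u v : List V} : SwapPath G u v → SwapPath G v u
  | .nil u => .nil u
  | .cons h p => p.reverse.trans (single h.symm)

def mapCons (c : V) {u v : List V} : SwapPath G u v → SwapPath G (c :: u) (c :: v)
  | .nil _ => .nil _
  | .cons h p => .cons (h.cons c) (p.mapCons c)

def mapAppend {u v : List V} : (x : List V) → SwapPath G u v → SwapPath G (x ++ u) (x ++ v)
  | [], p => p
  | c :: x, p => (p.mapAppend x).mapCons c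

protected def cast {u v v' : List V} (e : v = v') (p : SwapPath G u v) : SwapPath G u v' := e ▸ p

variable {u v w v' : List V}

theorem trans_nil (p : SwapPath G u v) : p.trans (.nil v) = p := by
  induction p with
  | nil => rfl
  | cons h p ih => simp only [trans, ih]

theorem trans_assoc {z : List V} (p : SwapPath G u v) (q : SwapPath G v w) (r : SwapPath G w z) :
    (p.trans q).trans r = p.trans (q.trans r) := by
  induction p with
  | nil => rfl
  | cons h p ih => simp only [trans, ih]

theorem mapCons_trans (c : V) (p : SwapPath G u v) (q : SwapPath G v w) :
    (p.trans q).mapCons c = (p.mapCons c).trans (q.mapCons c) := by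
  induction p with
  | nil => rfl
  | cons h p ih => simp only [trans, mapCons, ih]

theorem cons_cast {u₀ : List V} (h : SwapRel G u₀ u) (e : v = v') (p : SwapPath G u v) :
    SwapPath.cons h (p.cast e) = (SwapPath.cons h p).cast e := by
  subst e; rfl

/-- Homotopy of paths of `H(s)`, generated by backtracks and commutation squares: exactly the
relations that the flip maps are assumed to satisfy. -/
inductive Homotopic : {u v : List V} → SwapPath G u v → SwapPath G u v → Prop
  | refl {u v : List V} (p : SwapPath G u v) : Homotopic p p
  | symm {u v : List V} {p q : SwapPath G u v} : Homotopic p q → Homotopic q p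
  | trans {u v : List V} {p q r : SwapPath G u v} :
      Homotopic p q → Homotopic q r → Homotopic p r
  | cons {u v w : List V} (h : SwapRel G u v) {p q : SwapPath G v w} :
      Homotopic p q → Homotopic (.cons h p) (.cons h q)
  | cancel {u v w : List V} (h : SwapRel G u v) (h' : SwapRel G v u) (p : SwapPath G u w) :
      Homotopic (.cons h (.cons h' p)) p
  | square (w₁ w₂ w₃ : List V) (a b c d : V) {z : List V}
      (h₁ : SwapRel G (w₁ ++ a :: b :: w₂ ++ c :: d :: w₃) (w₁ ++ b :: a :: w₂ ++ c :: d :: w₃))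
      (h₂ : SwapRel G (w₁ ++ b :: a :: w₂ ++ c :: d :: w₃) (w₁ ++ b :: a :: w₂ ++ d :: c :: w₃))
      (h₃ : SwapRel G (w₁ ++ a :: b :: w₂ ++ c :: d :: w₃) (w₁ ++ a :: b :: w₂ ++ d :: c :: w₃))
      (h₄ : SwapRel G (w₁ ++ a :: b :: w₂ ++ d :: c :: w₃) (w₁ ++ b :: a :: w₂ ++ d :: c :: w₃))
      (p : SwapPath G (w₁ ++ b :: a :: w₂ ++ d :: c :: w₃) z) :
      Homotopic (.cons h₁ (.cons h₂ p)) (.cons h₃ (.cons h₄ p))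

namespace Homotopic

theorem trans_congr_left {p p' : SwapPath G u v} (H : Homotopic p p') (q : SwapPath G v w) :
    Homotopic (p.trans q) (p'.trans q) := by
  induction H with
  | refl p => exact .refl _
  | symm _ ih => exact (ih q).symm
  | trans _ _ ih₁ ih₂ => exact (ih₁ q).trans (ih₂ q)
  | cons h _ ih => exact .cons h (ih q)
  | cancel h h' p => exact .cancel h h' (p.trans q)
  | square w₁ w₂ w₃ a b c d h₁ h₂ h₃ h₄ p =>
      exact .square w₁ w₂ w₃ a b c d h₁ h₂ h₃ h₄ (p.trans q)

theorem trans_congr_right (p : SwapPath G u v) {q q' : SwapPath G v w} (H : Homotopic q q') :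
    Homotopic (p.trans q) (p.trans q') := by
  induction p with
  | nil => exact H
  | cons h p ih => exact .cons h (ih H)

theorem mapCons (c : V) {p q : SwapPath G u v} (H : Homotopic p q) :
    Homotopic (p.mapCons c) (q.mapCons c) := by
  induction H with
  | refl p => exact .refl _
  | symm _ ih => exact ih.symm
  | trans _ _ ih₁ ih₂ => exact ih₁.trans ih₂
  | cons h _ ih => exact .cons (h.cons c) ih
  | cancel h h' p => exact .cancel (h.cons c) (h'.cons c) (p.mapCons c)
  | square w₁ w₂ w₃ a b c' d h₁ h₂ h₃ h₄ p =>
      exact .square (c :: w₁) w₂ w₃ a b c' d (h₁.cons c) (h₂.cons c) (h₃.cons c)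
        (h₄.cons c) (p.mapCons c)

theorem trans_reverse (p : SwapPath G u v) : Homotopic (p.trans p.reverse) (.nil u) := by
  induction p with
  | nil => exact .refl _
  | cons h p ih =>
      show Homotopic (.cons h (p.trans (p.reverse.trans (single h.symm)))) _
      rw [← trans_assoc]
      exact (Homotopic.cons h (ih.trans_congr_left _)).trans (.cancel h h.symm _)

theorem trans_right_cancel {p q : SwapPath G u v} {r : SwapPath G v w}
    (H : Homotopic (p.trans r) (q.trans r)) : Homotopic p q := by
  have hp : Homotopic p ((p.trans r).trans r.reverse) := by
    rw [trans_assoc]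
    simpa only [trans_nil] using (trans_congr_right p (trans_reverse r)).symm
  have hq : Homotopic ((q.trans r).trans r.reverse) q := by
    rw [trans_assoc]
    simpa only [trans_nil] using trans_congr_right q (trans_reverse r)
  exact hp.trans ((H.trans_congr_left _).trans hq)

end Homotopic

theorem homotopic_cons_mapCons_mapCons {a b : V} (hab : G.Adj a b) {t t' : List V}
    (p : SwapPath G t t') (h : SwapRel G (a :: b :: t) (b :: a :: t))
    (h' : SwapRel G (a :: b :: t') (b :: a :: t')) :
    Homotopic (.cons h ((p.mapCons a).mapCons b))
      (((p.mapCons b).mapCons a).trans (single h')) := by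
  induction p with
  | nil => exact .refl _
  | cons hr p ih =>
      obtain ⟨w₁, w₂, c, d, hcd, rfl, rfl⟩ := hr
      have hcd' := SwapRel.of_adj w₁ w₂ hcd
      exact .trans (.square [] w₁ w₂ a b c d h ((hcd'.cons a).cons b) ((hcd'.cons b).cons a)
        (.of_adj [] _ hab) ((p.mapCons a).mapCons b)) (.cons _ (ih _ h'))

/-- The normal forms at the two ends of a swap agree only propositionally, so homotopies between
paths into them are taken up to a cast of the final word. -/
def HomotopicCast (p : SwapPath G u v) (q : SwapPath G u v') : Prop :=
  ∃ e : v = v', Homotopic (p.cast e) q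

theorem Homotopic.homotopicCast {p q : SwapPath G u v} (H : Homotopic p q) : HomotopicCast p q :=
  ⟨rfl, H⟩

namespace HomotopicCast

variable {w' : List V}

theorem homotopic {p q : SwapPath G u v} (H : HomotopicCast p q) : Homotopic p q := by
  obtain ⟨_, H⟩ := H
  exact H

theorem symm {p : SwapPath G u v} {q : SwapPath G u v'} (H : HomotopicCast p q) :
    HomotopicCast q p := by
  obtain ⟨rfl, H⟩ := H
  exact ⟨rfl, H.symm⟩

theorem trans {p : SwapPath G u v} {q : SwapPath G u v'} {r : SwapPath G u w}
    (H : HomotopicCast p q) (H' : HomotopicCast q r) : HomotopicCast p r := by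
  obtain ⟨rfl, H⟩ := H
  obtain ⟨rfl, H'⟩ := H'
  exact ⟨rfl, H.trans H'⟩

theorem cons {u₀ : List V} (h : SwapRel G u₀ u) {p : SwapPath G u v} {q : SwapPath G u v'}
    (H : HomotopicCast p q) : HomotopicCast (.cons h p) (.cons h q) := by
  obtain ⟨rfl, H⟩ := H
  exact ⟨rfl, H.cons h⟩

theorem trans_congr_right (p : SwapPath G u v) {q : SwapPath G v w} {q' : SwapPath G v w'}
    (H : HomotopicCast q q') : HomotopicCast (p.trans q) (p.trans q') := by
  obtain ⟨rfl, H⟩ := H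
  exact ⟨rfl, Homotopic.trans_congr_right p H⟩

theorem cast_left_iff (e : v = w) {p : SwapPath G u v} {q : SwapPath G u v'} :
    HomotopicCast (p.cast e) q ↔ HomotopicCast p q := by
  subst e; rfl

theorem cast_right_iff (e : v' = w) {p : SwapPath G u v} {q : SwapPath G u v'} :
    HomotopicCast p (q.cast e) ↔ HomotopicCast p q := by
  subst e; rfl

end HomotopicCast

/-- Nonemptiness ensures that in a triangle-free graph two adjacent letters never both satisfy
this for the same block. -/
def AdjBlock (G : SimpleGraph V) (a : V) (S : List V) : Prop := S ≠ [] ∧ ∀ x ∈ S, G.Adj a x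

def HeadAdj (G : SimpleGraph V) (a : V) : List (List V) → Prop
  | [] => False
  | S :: _ => AdjBlock G a S

theorem adjBlock_singleton {a b : V} (h : G.Adj a b) : AdjBlock G a [b] :=
  ⟨List.cons_ne_nil b [], fun _ hx => List.mem_singleton.1 hx ▸ h⟩

theorem AdjBlock.not_adjBlock (hG : G.CliqueFree 3) {a b : V} (hab : G.Adj a b) {S : List V}
    (ha : AdjBlock G a S) : ¬AdjBlock G b S := by
  classical
  rintro ⟨-, hb⟩
  obtain ⟨s, hs⟩ := List.exists_mem_of_ne_nil S ha.1
  exact hG {a, b, s} (SimpleGraph.is3Clique_triple_iff.2 ⟨hab, ha.2 s hs, hb s hs⟩)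

theorem HeadAdj.not_headAdj (hG : G.CliqueFree 3) {a b : V} (hab : G.Adj a b)
    {M : List (List V)} (ha : HeadAdj G a M) : ¬HeadAdj G b M := by
  cases M with
  | nil => exact ha.elim
  | cons S L => exact AdjBlock.not_adjBlock hG hab ha

section NormalForm

variable [LinearOrder V]

def passPath (a : V) : (S : List V) → (∀ x ∈ S, G.Adj a x) → (t : List V) →
    SwapPath G (a :: (S ++ t)) (S ++ a :: t)
  | [], _, _ => .nil _
  | s :: S, h, t =>
      .cons (.of_adj [] (S ++ t) (h s List.mem_cons_self))
        ((passPath a S (fun x hx => h x (List.mem_cons_of_mem s hx)) t).mapCons s)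

def enterPath (a : V) : (S : List V) → (∀ x ∈ S, G.Adj a x) → (t : List V) →
    SwapPath G (a :: (S ++ t)) (S.orderedInsert (· ≤ ·) a ++ t)
  | [], _, _ => .nil _
  | s :: S, h, t =>
      if hle : a ≤ s then (SwapPath.nil _).cast (by simp [hle])
      else
        (SwapPath.cons (.of_adj [] (S ++ t) (h s List.mem_cons_self))
          ((enterPath a S (fun x hx => h x (List.mem_cons_of_mem s hx)) t).mapCons s)).cast
          (by simp [hle])

theorem orderedInsert_singleton_comm {a b : V} (hab : a ≠ b) :
    [b].orderedInsert (· ≤ ·) a = [a].orderedInsert (· ≤ ·) b := by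
  rcases hab.lt_or_gt with h | h <;> simp [h.le, h.not_ge]

theorem homotopicCast_enterPath_pair {a b : V} (hab : G.Adj a b) (t : List V)
    (h : SwapRel G (a :: b :: t) (b :: a :: t)) :
    HomotopicCast (.cons h (enterPath b [a] (by simpa using hab.symm) t))
      (enterPath a [b] (by simpa using hab) t) := by
  rcases hab.ne.lt_or_gt with hlt | hgt
  · simp only [enterPath, dif_pos hlt.le, dif_neg hlt.not_ge, cons_cast,
      HomotopicCast.cast_left_iff, HomotopicCast.cast_right_iff]
    exact (Homotopic.cancel _ _ _).homotopicCast
  · simp only [enterPath, dif_pos hgt.le, dif_neg hgt.not_ge, cons_cast,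
      HomotopicCast.cast_left_iff, HomotopicCast.cast_right_iff]
    exact (Homotopic.refl _).homotopicCast

open Classical in
noncomputable def blockInsert (G : SimpleGraph V) (a : V) :
    (M : List (List V)) → (N : List (List V)) × SwapPath G (a :: M.flatten) N.flatten
  | [] => ⟨[[a]], .nil _⟩
  | S :: L =>
      if hS : AdjBlock G a S then
        if HeadAdj G a L then
          ⟨S :: (blockInsert G a L).1,
            (passPath a S hS.2 L.flatten).trans ((blockInsert G a L).2.mapAppend S)⟩
        else ⟨S.orderedInsert (· ≤ ·) a :: L, enterPath a S hS.2 L.flatten⟩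
      else ⟨[a] :: S :: L, .nil _⟩

theorem blockInsert_of_not_headAdj {a : V} {M : List (List V)} (h : ¬HeadAdj G a M) :
    blockInsert G a M = ⟨[a] :: M, .nil _⟩ := by
  cases M with
  | nil => rfl
  | cons S L => exact dif_neg h

theorem blockInsert_cons_of_headAdj {a : V} {S : List V} {L : List (List V)}
    (hS : AdjBlock G a S) (hL : HeadAdj G a L) :
    blockInsert G a (S :: L) = ⟨S :: (blockInsert G a L).1,
      (passPath a S hS.2 L.flatten).trans ((blockInsert G a L).2.mapAppend S)⟩ := by
  rw [blockInsert, dif_pos hS, if_pos hL]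

theorem blockInsert_cons_of_not_headAdj {a : V} {S : List V} {L : List (List V)}
    (hS : AdjBlock G a S) (hL : ¬HeadAdj G a L) :
    blockInsert G a (S :: L) =
      ⟨S.orderedInsert (· ≤ ·) a :: L, enterPath a S hS.2 L.flatten⟩ := by
  rw [blockInsert, dif_pos hS, if_neg hL]

theorem not_headAdj_blockInsert {a b : V} {M : List (List V)} (ha : HeadAdj G a M)
    (hb : ¬HeadAdj G b M) : ¬HeadAdj G b (blockInsert G a M).1 := by
  cases M with
  | nil => exact ha.elim
  | cons S L =>
      by_cases hL : HeadAdj G a L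
      · rw [blockInsert_cons_of_headAdj ha hL]
        exact hb
      · rw [blockInsert_cons_of_not_headAdj ha hL]
        exact fun hT => hb ⟨ha.1, fun x hx => hT.2 x ((List.mem_orderedInsert _).2 (.inr hx))⟩

noncomputable def blockInsertPair (G : SimpleGraph V) (a b : V) (M : List (List V)) :
    SwapPath G (a :: b :: M.flatten) (blockInsert G a (blockInsert G b M).1).1.flatten :=
  ((blockInsert G b M).2.mapCons a).trans (blockInsert G a (blockInsert G b M).1).2

theorem blockInsert_comm_of_headAdj {a b : V} (hab : G.Adj a b) {M : List (List V)}
    (ha : HeadAdj G a M) (hb : ¬HeadAdj G b M)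
    (h : SwapRel G (a :: b :: M.flatten) (b :: a :: M.flatten)) :
    (blockInsert G a (blockInsert G b M).1).1 = (blockInsert G b (blockInsert G a M).1).1 ∧
      HomotopicCast (.cons h (blockInsertPair G b a M)) (blockInsertPair G a b M) := by
  unfold blockInsertPair
  rw [blockInsert_of_not_headAdj hb]
  dsimp only
  rw [blockInsert_cons_of_headAdj (adjBlock_singleton hab) ha,
    blockInsert_of_not_headAdj (not_headAdj_blockInsert ha hb)]
  refine ⟨rfl, ?_⟩
  simp only [mapCons, trans, passPath, mapAppend, trans_nil]
  exact (Homotopic.refl _).homotopicCast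

theorem blockInsert_comm (hG : G.CliqueFree 3) {a b : V} (hab : G.Adj a b) (M : List (List V))
    (h : SwapRel G (a :: b :: M.flatten) (b :: a :: M.flatten)) :
    (blockInsert G a (blockInsert G b M).1).1 = (blockInsert G b (blockInsert G a M).1).1 ∧
      HomotopicCast (.cons h (blockInsertPair G b a M)) (blockInsertPair G a b M) := by
  by_cases ha : HeadAdj G a M
  · exact blockInsert_comm_of_headAdj hab ha (ha.not_headAdj hG hab) h
  by_cases hb : HeadAdj G b M
  · obtain ⟨hN, H⟩ := blockInsert_comm_of_headAdj hab.symm hb ha h.symm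
    exact ⟨hN.symm, ((H.cons h).symm.trans (Homotopic.cancel _ _ _).homotopicCast)⟩
  unfold blockInsertPair
  rw [blockInsert_of_not_headAdj ha, blockInsert_of_not_headAdj hb]
  dsimp only
  rw [blockInsert_cons_of_not_headAdj (adjBlock_singleton hab) ha,
    blockInsert_cons_of_not_headAdj (adjBlock_singleton hab.symm) hb]
  exact ⟨congrArg (· :: M) (orderedInsert_singleton_comm hab.ne),
    homotopicCast_enterPath_pair hab _ h⟩

noncomputable def normalForm (G : SimpleGraph V) :
    (w : List V) → (N : List (List V)) × SwapPath G w N.flatten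
  | [] => ⟨[], .nil _⟩
  | a :: w => ⟨(blockInsert G a (normalForm G w).1).1,
      ((normalForm G w).2.mapCons a).trans (blockInsert G a (normalForm G w).1).2⟩

theorem normalForm_cons_cons_snd (a b : V) (w : List V) :
    (normalForm G (a :: b :: w)).2
      = (((normalForm G w).2.mapCons b).mapCons a).trans
          (blockInsertPair G a b (normalForm G w).1) := by
  simp only [normalForm, mapCons_trans, trans_assoc, blockInsertPair]

theorem homotopicCast_trans_blockInsert {u v : List V} (h : SwapRel G u v)
    {X : (N : List (List V)) × SwapPath G v N.flatten}
    {Y : (N : List (List V)) × SwapPath G u N.flatten}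
    (hXY : X.1 = Y.1) (H : HomotopicCast (.cons h X.2) Y.2) (c : V) :
    HomotopicCast (.cons (h.cons c) ((X.2.mapCons c).trans (blockInsert G c X.1).2))
      ((Y.2.mapCons c).trans (blockInsert G c Y.1).2) := by
  obtain ⟨N, P⟩ := X
  obtain ⟨N', Q⟩ := Y
  dsimp only at hXY H ⊢
  subst hXY
  exact ((H.homotopic.mapCons c).trans_congr_left _).homotopicCast

theorem normalForm_swap (hG : G.CliqueFree 3) {a b : V} (hab : G.Adj a b) (w₁ w₂ : List V) :
    (normalForm G (w₁ ++ b :: a :: w₂)).1 = (normalForm G (w₁ ++ a :: b :: w₂)).1 ∧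
      HomotopicCast (.cons (.of_adj w₁ w₂ hab) (normalForm G (w₁ ++ b :: a :: w₂)).2)
        (normalForm G (w₁ ++ a :: b :: w₂)).2 := by
  induction w₁ with
  | nil =>
      obtain ⟨hN, H⟩ := blockInsert_comm hG hab (normalForm G w₂).1 (.of_adj [] _ hab)
      refine ⟨hN.symm, ?_⟩
      simp only [List.nil_append]
      rw [normalForm_cons_cons_snd, normalForm_cons_cons_snd]
      have hslide := (homotopic_cons_mapCons_mapCons hab (normalForm G w₂).2 (.of_adj [] _ hab)
        (.of_adj [] _ hab)).trans_congr_left (blockInsertPair G b a (normalForm G w₂).1)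
      rw [trans_assoc] at hslide
      exact hslide.homotopicCast.trans (H.trans_congr_right _)
  | cons c w₁ ih =>
      exact ⟨congrArg (fun N => (blockInsert G c N).1) ih.1,
        homotopicCast_trans_blockInsert _ ih.1 ih.2 c⟩

theorem homotopicCast_trans_normalForm (hG : G.CliqueFree 3) {u v : List V}
    (p : SwapPath G u v) :
    HomotopicCast (p.trans (normalForm G v).2) (normalForm G u).2 := by
  induction p with
  | nil => exact (Homotopic.refl _).homotopicCast
  | cons h p ih =>
      obtain ⟨w₁, w₂, a, b, hab, rfl, rfl⟩ := h
      exact (ih.cons _).trans (normalForm_swap hG hab w₁ w₂).2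

end NormalForm

theorem homotopic_of_cliqueFree (hG : G.CliqueFree 3) {u v : List V} (p q : SwapPath G u v) :
    Homotopic p q := by
  let _ : LinearOrder V := IsWellOrder.linearOrder WellOrderingRel
  exact Homotopic.trans_right_cancel ((homotopicCast_trans_normalForm hG p).trans
    (homotopicCast_trans_normalForm hG q).symm).homotopic

end SwapPath

section PathMap

variable (EW : List V → Type*) [∀ w, NormedAddCommGroup (EW w)]
  [∀ w, InnerProductSpace ℂ (EW w)]
  (F : ∀ u v : List V, SwapRel G u v → (EW u ≃ₗᵢ[ℂ] EW v))

theorem pathMap_eq_of_homotopic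
    (hsymm : ∀ (u v : List V) (h : SwapRel G u v) (h' : SwapRel G v u),
      (F u v h).trans (F v u h') = LinearIsometryEquiv.refl ℂ (EW u))
    (hcomm : ∀ (w₁ w₂ w₃ : List V) (a b c d : V)
      (h₁ : SwapRel G (w₁ ++ a :: b :: w₂ ++ c :: d :: w₃) (w₁ ++ b :: a :: w₂ ++ c :: d :: w₃))
      (h₂ : SwapRel G (w₁ ++ b :: a :: w₂ ++ c :: d :: w₃) (w₁ ++ b :: a :: w₂ ++ d :: c :: w₃))
      (h₃ : SwapRel G (w₁ ++ a :: b :: w₂ ++ c :: d :: w₃) (w₁ ++ a :: b :: w₂ ++ d :: c :: w₃))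
      (h₄ : SwapRel G (w₁ ++ a :: b :: w₂ ++ d :: c :: w₃) (w₁ ++ b :: a :: w₂ ++ d :: c :: w₃)),
      (F _ _ h₁).trans (F _ _ h₂) = (F _ _ h₃).trans (F _ _ h₄))
    {u v : List V} {p q : SwapPath G u v} (H : p.Homotopic q) :
    pathMap EW F p = pathMap EW F q := by
  induction H with
  | refl p => rfl
  | symm _ ih => exact ih.symm
  | trans _ _ ih₁ ih₂ => exact ih₁.trans ih₂
  | cons h _ ih => exact congrArg (F _ _ h).trans ih
  | cancel h h' p =>
      show (F _ _ h).trans ((F _ _ h').trans (pathMap EW F p)) = pathMap EW F p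
      rw [LinearIsometryEquiv.trans_assoc, hsymm, LinearIsometryEquiv.refl_trans]
  | square w₁ w₂ w₃ a b c d h₁ h₂ h₃ h₄ p =>
      show (F _ _ h₁).trans ((F _ _ h₂).trans (pathMap EW F p))
          = (F _ _ h₃).trans ((F _ _ h₄).trans (pathMap EW F p))
      rw [LinearIsometryEquiv.trans_assoc, hcomm, ← LinearIsometryEquiv.trans_assoc]

end PathMap

end

/-- Uniqueness of flip composites: for a triangle-free graph `G` and a unitary flip system
(encoded by the unitaries `F` attached to the edges of the presentation graph, which
invert edge-reversal and satisfy the disjoint-commutation squares), the map induced by any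
cycle in the presentation graph is the identity; equivalently, the composite along a path
depends only on its endpoints. -/
theorem stmt16 {V : Type*} (G : SimpleGraph V) (hG : G.CliqueFree 3)
    (EW : List V → Type*) [∀ w, NormedAddCommGroup (EW w)] [∀ w, InnerProductSpace ℂ (EW w)]
    (F : ∀ u v : List V, SwapRel G u v → (EW u ≃ₗᵢ[ℂ] EW v))
    (hsymm : ∀ (u v : List V) (h : SwapRel G u v) (h' : SwapRel G v u),
      (F u v h).trans (F v u h') = LinearIsometryEquiv.refl ℂ (EW u))
    (hcomm : ∀ (w₁ w₂ w₃ : List V) (a b c d : V)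
      (h₁ : SwapRel G (w₁ ++ a :: b :: w₂ ++ c :: d :: w₃) (w₁ ++ b :: a :: w₂ ++ c :: d :: w₃))
      (h₂ : SwapRel G (w₁ ++ b :: a :: w₂ ++ c :: d :: w₃) (w₁ ++ b :: a :: w₂ ++ d :: c :: w₃))
      (h₃ : SwapRel G (w₁ ++ a :: b :: w₂ ++ c :: d :: w₃) (w₁ ++ a :: b :: w₂ ++ d :: c :: w₃))
      (h₄ : SwapRel G (w₁ ++ a :: b :: w₂ ++ d :: c :: w₃) (w₁ ++ b :: a :: w₂ ++ d :: c :: w₃)),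
      (F _ _ h₁).trans (F _ _ h₂) = (F _ _ h₃).trans (F _ _ h₄)) :
    (∀ (u : List V) (p : SwapPath G u u),
      pathMap EW F p = LinearIsometryEquiv.refl ℂ (EW u)) ∧
    (∀ (u v : List V) (p q : SwapPath G u v), pathMap EW F p = pathMap EW F q) := by
  have key : ∀ (u v : List V) (p q : SwapPath G u v), pathMap EW F p = pathMap EW F q :=
    fun _ _ p q =>
      pathMap_eq_of_homotopic EW F hsymm hcomm (SwapPath.homotopic_of_cliqueFree hG p q)
  exact ⟨fun u p => key u u p (.nil u), key⟩
end
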